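/- arXiv:2412.05509 — 8 statements merged into one kernel-verified Lean document; each statement's English description precedes it below -/
import Mathlib

section
/- Let X be a separable complex Banach space, T : X → X a continuous linear operator, D ⊆ X a dense subset, S : X → X a map with S(D) ⊆ D, and (n_k) a strictly increasing sequence of natural numbers such that for every x ∈ D one has T^{n_k}x → 0 and S^{n_k}x → 0 as k → ∞, and T(Sx) = x. Then T is hypercyclic, i.e. there exists x ∈ X whose orbit {T^n x : n ∈ ℕ} is dense in X. Moreover, if these hypotheses hold with n_k = k for all k (i.e. T^n x → 0 and S^n x → 0 for every x ∈ D), then T is topologically mixing: for any two nonempty open sets U, V ⊆ X there exists N ∈ ℕ such that T^n(U) ∩ V ≠ ∅ for all n ≥ N. -/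
/-!
A vector whose orbit meets every member of a countable basis lies in a countable intersection
of open sets, each dense as soon as `T` is topologically transitive; Baire's theorem then gives
hypercyclicity. Transitivity comes from the criterion itself: for `u, v ∈ D`, the vector
`u + S^{n_k} v` is close to `u`, and `T^{n_k}` maps it to `T^{n_k} u + v`, which is close to `v`.
Along `n_k = k` this happens for all large `n`, which is mixing.
-/

open Filter Topology Set

theorem Set.LeftInvOn.iterate {α : Type*} {f g : α → α} {s : Set α} (h : LeftInvOn f g s)
    (hg : MapsTo g s s) (n : ℕ) : LeftInvOn f^[n] g^[n] s := by
  induction n with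
  | zero => exact fun x _ => rfl
  | succ n ih =>
    intro x hx
    rw [Function.iterate_succ_apply, Function.iterate_succ_apply' g, h (hg.iterate n hx), ih hx]

theorem eventually_image_inter_nonempty_of_tendsto_zero {ι X F : Type*} [AddCommMonoid X]
    [TopologicalSpace X] [ContinuousAdd X] [FunLike F X X] [AddMonoidHomClass F X X]
    {l : Filter ι} {A : ι → F} {B : ι → X → X} {D : Set X} (hD : Dense D)
    (hA : ∀ x ∈ D, Tendsto (fun i => A i x) l (𝓝 0))
    (hB : ∀ x ∈ D, Tendsto (fun i => B i x) l (𝓝 0))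
    (hAB : ∀ i, LeftInvOn (A i) (B i) D)
    {U V : Set X} (hU : IsOpen U) (hV : IsOpen V) (hUne : U.Nonempty) (hVne : V.Nonempty) :
    ∀ᶠ i in l, (A i '' U ∩ V).Nonempty := by
  obtain ⟨u, huD, huU⟩ := hD.exists_mem_open hU hUne
  obtain ⟨v, hvD, hvV⟩ := hD.exists_mem_open hV hVne
  have hnear_u : Tendsto (fun i => u + B i v) l (𝓝 u) := by
    simpa using tendsto_const_nhds.add (hB v hvD)
  have hnear_v : Tendsto (fun i => A i (u + B i v)) l (𝓝 v) := by
    simp only [map_add, hAB _ hvD]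
    simpa using (hA u huD).add tendsto_const_nhds
  filter_upwards [hnear_u.eventually (hU.mem_nhds huU), hnear_v.eventually (hV.mem_nhds hvV)]
    with i hiU hiV
  exact ⟨_, mem_image_of_mem _ hiU, hiV⟩

/-- Birkhoff's transitivity theorem. -/
theorem exists_dense_orbit_of_forall_exists_iterate_image_inter_nonempty {X : Type*}
    [TopologicalSpace X] [BaireSpace X] [SecondCountableTopology X] [Nonempty X] {f : X → X}
    (hf : Continuous f)
    (h : ∀ U V : Set X, IsOpen U → IsOpen V → U.Nonempty → V.Nonempty →
      ∃ n, (f^[n] '' U ∩ V).Nonempty) :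
    ∃ x, Dense (range fun n => f^[n] x) := by
  obtain ⟨b, hbc, hbne, hb⟩ := TopologicalSpace.exists_countable_basis X
  have hopen : ∀ V ∈ b, IsOpen (⋃ n, f^[n] ⁻¹' V) := fun V hV =>
    isOpen_iUnion fun n => (hb.isOpen hV).preimage (hf.iterate n)
  have hdense : ∀ V ∈ b, Dense (⋃ n, f^[n] ⁻¹' V) := by
    intro V hV
    refine dense_iff_inter_open.2 fun U hU hUne => ?_
    obtain ⟨n, _, ⟨x, hxU, rfl⟩, hxV⟩ :=
      h U V hU (hb.isOpen hV) hUne (nonempty_iff_ne_empty.2 fun h => hbne (h ▸ hV))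
    exact ⟨x, hxU, mem_iUnion.2 ⟨n, hxV⟩⟩
  obtain ⟨x, hx⟩ := (dense_biInter_of_isOpen hopen hbc hdense).nonempty
  refine ⟨x, hb.dense_iff.2 fun V hV _ => ?_⟩
  obtain ⟨n, hn⟩ := mem_iUnion.1 (mem_iInter₂.1 hx V hV)
  exact ⟨_, hn, n, rfl⟩

theorem gethner_shapiro_criterion_general
    {X : Type*} [NormedAddCommGroup X] [NormedSpace ℂ X] [CompleteSpace X]
    [TopologicalSpace.SeparableSpace X]
    (T : X →L[ℂ] X) (D : Set X) (hD : Dense D)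
    (S : X → X) (hSD : Set.MapsTo S D D)
    (nk : ℕ → ℕ)
    (hT0 : ∀ x ∈ D, Tendsto (fun k : ℕ => (T ^ nk k) x) atTop (𝓝 0))
    (hS0 : ∀ x ∈ D, Tendsto (fun k : ℕ => S^[nk k] x) atTop (𝓝 0))
    (hTS : ∀ x ∈ D, T (S x) = x) :
    (∃ x : X, Dense (Set.range fun n : ℕ => (T ^ n) x)) ∧
    ((∀ x ∈ D, Tendsto (fun n : ℕ => (T ^ n) x) atTop (𝓝 0)) →
      (∀ x ∈ D, Tendsto (fun n : ℕ => S^[n] x) atTop (𝓝 0)) →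
      ∀ U V : Set X, IsOpen U → IsOpen V → U.Nonempty → V.Nonempty →
        ∃ N : ℕ, ∀ n ≥ N, ((T ^ n) '' U ∩ V).Nonempty) := by
  have hinv : ∀ n, LeftInvOn ⇑(T ^ n) S^[n] D := fun n => by
    simpa only [FunLike.coe_pow_eq_iterate] using LeftInvOn.iterate hTS hSD n
  refine ⟨?_, fun hT0' hS0' U V hU hV hUne hVne =>
    eventually_atTop.1 (eventually_image_inter_nonempty_of_tendsto_zero (A := fun n => T ^ n)
      hD hT0' hS0' hinv hU hV hUne hVne)⟩
  simp only [FunLike.coe_pow_eq_iterate]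
  refine exists_dense_orbit_of_forall_exists_iterate_image_inter_nonempty T.continuous
    fun U V hU hV hUne hVne => ?_
  obtain ⟨k, hk⟩ := (eventually_image_inter_nonempty_of_tendsto_zero (A := fun k => T ^ nk k)
    hD hT0 hS0 (fun k => hinv (nk k)) hU hV hUne hVne).exists
  exact ⟨nk k, by simpa only [FunLike.coe_pow_eq_iterate] using hk⟩

/-- **Gethner–Shapiro criterion.** If `T` is a continuous linear operator on a separable
complex Banach space `X`, `D ⊆ X` is dense, `S` maps `D` into `D`, and along a strictly
increasing sequence `(n_k)` one has `T^{n_k}x → 0`, `S^{n_k}x → 0` and `T(Sx) = x` for all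
`x ∈ D`, then `T` is hypercyclic.  Moreover, if the hypotheses hold with `n_k = k`
(i.e. `T^n x → 0` and `S^n x → 0` for every `x ∈ D`), then `T` is topologically mixing. -/
theorem gethner_shapiro_criterion
    {X : Type*} [NormedAddCommGroup X] [NormedSpace ℂ X] [CompleteSpace X]
    [TopologicalSpace.SeparableSpace X]
    (T : X →L[ℂ] X) (D : Set X) (hD : Dense D)
    (S : X → X) (hSD : Set.MapsTo S D D)
    (nk : ℕ → ℕ) (hnk : StrictMono nk)
    (hT0 : ∀ x ∈ D, Tendsto (fun k : ℕ => (T ^ nk k) x) atTop (𝓝 0))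
    (hS0 : ∀ x ∈ D, Tendsto (fun k : ℕ => S^[nk k] x) atTop (𝓝 0))
    (hTS : ∀ x ∈ D, T (S x) = x) :
    (∃ x : X, Dense (Set.range fun n : ℕ => (T ^ n) x)) ∧
    ((∀ x ∈ D, Tendsto (fun n : ℕ => (T ^ n) x) atTop (𝓝 0)) →
      (∀ x ∈ D, Tendsto (fun n : ℕ => S^[n] x) atTop (𝓝 0)) →
      ∀ U V : Set X, IsOpen U → IsOpen V → U.Nonempty → V.Nonempty →
        ∃ N : ℕ, ∀ n ≥ N, ((T ^ n) '' U ∩ V).Nonempty) :=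
  gethner_shapiro_criterion_general T D hD S hSD nk hT0 hS0 hTS
end

section
/- Let X be a separable complex Banach space, T : X → X a continuous linear operator, D ⊆ X a dense subset, and S : X → X a map with S(D) ⊆ D such that for every x ∈ D: the family (T^n x)_{n ≥ 0} is summable in X, the family (S^n x)_{n ≥ 0} is summable in X, and T(Sx) = x. Then T is topologically mixing and chaotic; in particular T is hypercyclic (some vector has dense orbit) and the set of periodic points {v ∈ X : T^m v = v for some m ≥ 1} is dense in X. -/
/-!
Mixing: for `x, y ∈ D` the vector `x + Sⁿ y` is close to `x` and is sent by `Tⁿ` to `Tⁿ x + y`,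
which is close to `y`. A dense orbit then exists by Birkhoff's transitivity theorem.
Periodic points: for `x ∈ D` and `m ≥ 1` the vector `∑ⱼ T^{mj} x + ∑ⱼ S^{m(j+1)} x` is fixed by
`Tᵐ`, which removes the term `x` from the first series and adds it to the second; as `m → ∞` these
are subseries of two convergent series supported further and further out, so the vector tends to
`x`.
-/

open Filter Topology Function Set

section Dynamics

variable {X : Type*} [TopologicalSpace X]

def TopologicallyTransitive (f : X → X) : Prop :=
  ∀ U V : Set X, IsOpen U → IsOpen V → U.Nonempty → V.Nonempty → ∃ n, (f^[n] '' U ∩ V).Nonempty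

def TopologicallyMixing (f : X → X) : Prop :=
  ∀ U V : Set X, IsOpen U → IsOpen V → U.Nonempty → V.Nonempty →
    ∃ N : ℕ, ∀ n ≥ N, (f^[n] '' U ∩ V).Nonempty

theorem TopologicallyMixing.topologicallyTransitive {f : X → X} (h : TopologicallyMixing f) :
    TopologicallyTransitive f := fun U V hU hV hU' hV' =>
  let ⟨N, hN⟩ := h U V hU hV hU' hV'
  ⟨N, hN N le_rfl⟩

/-- Birkhoff's transitivity theorem: over a countable basis `b`, the points with dense orbit form
the dense `G_δ` set `⋂_{V ∈ b} ⋃ₙ f⁻ⁿ V`. -/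
theorem TopologicallyTransitive.exists_dense_orbit [BaireSpace X]
    [SecondCountableTopology X] [Nonempty X] {f : X → X} (hf : Continuous f)
    (h : TopologicallyTransitive f) : ∃ x, Dense (range fun n => f^[n] x) := by
  obtain ⟨b, hbc, hb_empty, hb⟩ := TopologicalSpace.exists_countable_basis X
  have : Countable b := hbc.to_subtype
  have hopen : ∀ V : b, IsOpen (⋃ n, f^[n] ⁻¹' V) := fun V =>
    isOpen_iUnion fun n => (hb.isOpen V.2).preimage (hf.iterate n)
  have hdense : ∀ V : b, Dense (⋃ n, f^[n] ⁻¹' V) := by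
    intro V
    refine dense_iff_inter_open.2 fun U hU hU_ne => ?_
    have hV_ne : (V : Set X).Nonempty := nonempty_iff_ne_empty.2 fun hV => hb_empty (hV ▸ V.2)
    obtain ⟨n, _, ⟨u, hu, rfl⟩, hV⟩ := h U V hU (hb.isOpen V.2) hU_ne hV_ne
    exact ⟨u, hu, mem_iUnion.2 ⟨n, hV⟩⟩
  obtain ⟨x, hx⟩ := (dense_iInter_of_isOpen hopen hdense).nonempty
  refine ⟨x, hb.dense_iff.2 fun V hV _ => ?_⟩
  obtain ⟨n, hn⟩ := mem_iUnion.1 (mem_iInter.1 hx ⟨V, hV⟩)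
  exact ⟨_, hn, n, rfl⟩

end Dynamics

theorem iterate_apply_iterate_add_of_apply_iterate_succ {α : Type*} {f g : α → α} {x : α}
    (h : ∀ n, f (g^[n + 1] x) = g^[n] x) (m k : ℕ) : f^[m] (g^[m + k] x) = g^[k] x := by
  induction m with
  | zero => simp
  | succ m ih => rw [iterate_succ_apply, show m + 1 + k = m + k + 1 by omega, h, ih]

theorem topologicallyMixing_of_tendsto_iterate {X F : Type*} [TopologicalSpace X] [AddZeroClass X]
    [ContinuousAdd X] [FunLike F X X] [AddHomClass F X X] (T : F) {S : X → X} {D₀ D₁ : Set X}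
    (hD₀ : Dense D₀) (hD₁ : Dense D₁) (hT : ∀ x ∈ D₀, Tendsto (fun n => T^[n] x) atTop (𝓝 0))
    (hS : ∀ y ∈ D₁, Tendsto (fun n => S^[n] y) atTop (𝓝 0))
    (hTS : ∀ n, ∀ y ∈ D₁, T^[n] (S^[n] y) = y) : TopologicallyMixing T := by
  intro U V hU hV hU_ne hV_ne
  obtain ⟨x, hxD, hxU⟩ := hD₀.exists_mem_open hU hU_ne
  obtain ⟨y, hyD, hyV⟩ := hD₁.exists_mem_open hV hV_ne
  have hU_ev : ∀ᶠ n in atTop, x + S^[n] y ∈ U := by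
    refine (tendsto_const_nhds.add (hS y hyD)).eventually (hU.mem_nhds ?_)
    rwa [add_zero]
  have hV_ev : ∀ᶠ n in atTop, T^[n] x + y ∈ V := by
    refine ((hT x hxD).add tendsto_const_nhds).eventually (hV.mem_nhds ?_)
    rwa [zero_add]
  obtain ⟨N, hN⟩ := eventually_atTop.1 (hU_ev.and hV_ev)
  refine ⟨N, fun n hn => ⟨_, mem_image_of_mem _ (hN n hn).1, ?_⟩⟩
  rw [iterate_map_add, hTS n y hyD]
  exact (hN n hn).2

section Series

variable {G : Type*} [AddCommGroup G]

theorem Summable.tendsto_tsum_comp_mul_succ [TopologicalSpace G] [IsTopologicalAddGroup G]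
    {f : ℕ → G} (hf : Summable f) :
    Tendsto (fun m => ∑' j, f (m * (j + 1))) atTop (𝓝 0) := by
  intro e he
  obtain ⟨s, hs⟩ := hf.tsum_vanishing he
  rw [Filter.mem_map]
  filter_upwards [eventually_gt_atTop (s.sup id)] with m hm
  have hinj : Injective fun j => m * (j + 1) :=
    (mul_right_injective₀ (by omega)).comp (add_left_injective 1)
  rw [mem_preimage, ← tsum_range f hinj]
  refine hs _ (disjoint_left.2 ?_)
  rintro _ ⟨j, rfl⟩ hjs
  have hle_sup : m * (j + 1) ≤ s.sup id := Finset.le_sup (f := id) hjs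
  have hle_mul : m ≤ m * (j + 1) := Nat.le_mul_of_pos_right _ (by omega)
  omega

variable [UniformSpace G] [IsUniformAddGroup G] [CompleteSpace G] [T2Space G]

theorem Summable.tendsto_tsum_comp_mul {f : ℕ → G} (hf : Summable f) :
    Tendsto (fun m => ∑' j, f (m * j)) atTop (𝓝 (f 0)) := by
  have hlim := (tendsto_const_nhds (x := f 0)).add hf.tendsto_tsum_comp_mul_succ
  rw [add_zero] at hlim
  refine hlim.congr' ?_
  filter_upwards [eventually_ge_atTop 1] with m hm
  have hsplit := (hf.comp_injective (mul_right_injective₀ (by omega : m ≠ 0))).tsum_eq_zero_add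
  simpa only [comp_apply, mul_zero] using hsplit.symm

end Series

theorem isFixedPt_tsum_iterate_add_tsum_iterate_succ {X F : Type*} [AddCommGroup X]
    [TopologicalSpace X] [IsTopologicalAddGroup X] [T2Space X] [FunLike F X X]
    [AddMonoidHomClass F X X] {R : F} (hR : Continuous R) {Q : X → X} {x : X}
    (hRx : Summable fun j => R^[j] x) (hQx : Summable fun j => Q^[j] x)
    (hRQ : ∀ j, R (Q^[j + 1] x) = Q^[j] x) :
    IsFixedPt R (∑' j, R^[j] x + ∑' j, Q^[j + 1] x) := by
  have hR_tsum : R (∑' j, R^[j] x) = ∑' j, R^[j] x - x := by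
    rw [hRx.map_tsum R hR, hRx.tsum_eq_zero_add]
    simp [iterate_succ_apply']
  have hQ_tsum : R (∑' j, Q^[j + 1] x) = x + ∑' j, Q^[j + 1] x := by
    rw [((summable_nat_add_iff 1).2 hQx).map_tsum R hR]
    simp only [hRQ]
    rw [hQx.tsum_eq_zero_add, iterate_zero_apply]
  rw [IsFixedPt, map_add, hR_tsum, hQ_tsum]
  abel

theorem mem_closure_periodicPts {X 𝕜 : Type*} [AddCommGroup X] [UniformSpace X]
    [IsUniformAddGroup X] [CompleteSpace X] [T2Space X] [Semiring 𝕜] [Module 𝕜 X]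
    (T : X →L[𝕜] X) {S : X → X} {x : X} (hT : Summable fun n => T^[n] x)
    (hS : Summable fun n => S^[n] x) (hTS : ∀ n, T (S^[n + 1] x) = S^[n] x) :
    x ∈ closure (periodicPts T) := by
  have hlim : Tendsto (fun m => ∑' j, T^[m * j] x + ∑' j, S^[m * (j + 1)] x) atTop (𝓝 x) := by
    simpa using hT.tendsto_tsum_comp_mul.add hS.tendsto_tsum_comp_mul_succ
  refine mem_closure_of_tendsto hlim ?_
  filter_upwards [eventually_ge_atTop 1] with m hm
  have hmul : Injective (m * ·) := mul_right_injective₀ (by omega)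
  have hTm : Summable fun j => (⇑(T ^ m))^[j] x := by
    simpa only [FunLike.coe_pow_eq_iterate, ← iterate_mul, comp_def] using hT.comp_injective hmul
  have hSm : Summable fun j => (S^[m])^[j] x := by
    simpa only [← iterate_mul, comp_def] using hS.comp_injective hmul
  have hTSm : ∀ j, (T ^ m) ((S^[m])^[j + 1] x) = (S^[m])^[j] x := fun j => by
    rw [← iterate_mul, ← iterate_mul, FunLike.coe_pow_eq_iterate, mul_add, mul_one, add_comm]
    exact iterate_apply_iterate_add_of_apply_iterate_succ hTS m (m * j)
  have hfix := isFixedPt_tsum_iterate_add_tsum_iterate_succ (T ^ m).continuous hTm hSm hTSm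
  refine ⟨m, hm, ?_⟩
  simpa only [IsPeriodicPt, FunLike.coe_pow_eq_iterate, ← iterate_mul] using hfix

/-- **Chaoticity criterion.** If `T` is a continuous linear operator on a separable complex
Banach space `X`, `D ⊆ X` is dense, `S` maps `D` into `D`, and for every `x ∈ D` the families
`(T^n x)` and `(S^n x)` are summable (unconditionally convergent series) and `T(Sx) = x`,
then `T` is topologically mixing and chaotic: `T` has a dense orbit and its periodic points
are dense. -/
theorem chaoticity_criterion
    {X : Type*} [NormedAddCommGroup X] [NormedSpace ℂ X] [CompleteSpace X]
    [TopologicalSpace.SeparableSpace X]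
    (T : X →L[ℂ] X) (D : Set X) (hD : Dense D)
    (S : X → X) (hSD : Set.MapsTo S D D)
    (hT : ∀ x ∈ D, Summable fun n : ℕ => (T ^ n) x)
    (hS : ∀ x ∈ D, Summable fun n : ℕ => S^[n] x)
    (hTS : ∀ x ∈ D, T (S x) = x) :
    (∀ U V : Set X, IsOpen U → IsOpen V → U.Nonempty → V.Nonempty →
        ∃ N : ℕ, ∀ n ≥ N, ((T ^ n) '' U ∩ V).Nonempty) ∧
    (∃ x : X, Dense (Set.range fun n : ℕ => (T ^ n) x)) ∧
    Dense {v : X | ∃ m : ℕ, 1 ≤ m ∧ (T ^ m) v = v} := by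
  simp only [FunLike.coe_pow_eq_iterate] at hT ⊢
  have hTS_orbit : ∀ x ∈ D, ∀ n, T (S^[n + 1] x) = S^[n] x := fun x hx n => by
    rw [iterate_succ_apply']
    exact hTS _ (hSD.iterate n hx)
  have hmix : TopologicallyMixing T :=
    topologicallyMixing_of_tendsto_iterate T hD hD (fun x hx => (hT x hx).tendsto_atTop_zero)
      (fun y hy => (hS y hy).tendsto_atTop_zero) fun n y hy => by
        simpa using iterate_apply_iterate_add_of_apply_iterate_succ (hTS_orbit y hy) n 0
  have hper : Dense (periodicPts T) := dense_closure.1 <| hD.mono fun x hx =>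
    mem_closure_periodicPts T (hT x hx) (hS x hx) (hTS_orbit x hx)
  refine ⟨hmix, hmix.topologicallyTransitive.exists_dense_orbit T.continuous, hper.mono ?_⟩
  rintro v ⟨m, hm, hv⟩
  exact ⟨m, hm, hv⟩
end

section
/- Let E be a complex Banach space, r > 0, and J : E → (ℂ → ℂ) a linear map such that for every f ∈ E the function J f is analytic on the open disc B(0,r) ⊆ ℂ, and such that for every z ∈ B(0,r) the evaluation functional f ↦ (J f)(z) is continuous on E. Then for every n ≥ 0 the Taylor-coefficient functional k_n : E → ℂ, k_n(f) = (J f)^{(n)}(0)/n!, is a continuous (bounded) linear functional on E. -/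
/-!
By the uniform boundedness principle, the evaluations `f ↦ (J f)(z)` on a circle `|z| = ρ < r`
are bounded by a common constant times `‖f‖`, because for each `f` they are bounded by
compactness of the circle. Cauchy's estimate then bounds
`|(J f)^{(n)}(0)| ≤ n! C ‖f‖ / ρⁿ`.
-/

open Metric

section UniformBound

variable {𝕜 E F X : Type*} [NontriviallyNormedField 𝕜]
  [NormedAddCommGroup E] [NormedSpace 𝕜 E] [CompleteSpace E]
  [NormedAddCommGroup F] [NormedSpace 𝕜 F]

theorem LinearMap.exists_norm_apply_le_of_continuous_eval (T : E →ₗ[𝕜] (X → F)) (s : Set X)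
    (hcont : ∀ x ∈ s, Continuous fun f => T f x)
    (hbdd : ∀ f, ∃ C, ∀ x ∈ s, ‖T f x‖ ≤ C) :
    ∃ C, ∀ f, ∀ x ∈ s, ‖T f x‖ ≤ C * ‖f‖ := by
  let eval : s → E →L[𝕜] F := fun x => ⟨(LinearMap.proj (x : X)).comp T, hcont x x.2⟩
  obtain ⟨C, hC⟩ := banach_steinhaus (g := eval) fun f =>
    let ⟨C, hC⟩ := hbdd f
    ⟨C, fun x => hC x x.2⟩
  exact ⟨C, fun f x hx => (eval ⟨x, hx⟩).le_of_opNorm_le (hC _) f⟩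

end UniformBound

section IteratedDeriv

variable {𝕜 E F : Type*} [NontriviallyNormedField 𝕜] [AddCommGroup E] [Module 𝕜 E]
  [NormedAddCommGroup F] [NormedSpace 𝕜 F]

noncomputable def LinearMap.iteratedDerivAt (T : E →ₗ[𝕜] (𝕜 → F)) (n : ℕ) (x : 𝕜)
    (hT : ∀ f, ContDiffAt 𝕜 n (T f) x) : E →ₗ[𝕜] F where
  toFun f := iteratedDeriv n (T f) x
  map_add' f g := by rw [map_add, iteratedDeriv_add (hT f) (hT g)]
  map_smul' c f := by rw [map_smul, iteratedDeriv_const_smul_field]; rfl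

end IteratedDeriv

theorem LinearMap.exists_continuousLinearMap_iteratedDeriv_eq {E F : Type*}
    [NormedAddCommGroup E] [NormedSpace ℂ E] [CompleteSpace E]
    [NormedAddCommGroup F] [NormedSpace ℂ F] [CompleteSpace F]
    (J : E →ₗ[ℂ] (ℂ → F)) {c : ℂ} {R : ℝ} (hR : 0 < R)
    (hJ : ∀ f, DiffContOnCl ℂ (J f) (ball c R))
    (hev : ∀ z ∈ sphere c R, Continuous fun f => J f z) (n : ℕ) :
    ∃ D : E →L[ℂ] F, ∀ f, D f = iteratedDeriv n (J f) c := by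
  have hsmooth : ∀ f, ContDiffAt ℂ n (J f) c := fun f =>
    ((hJ f).differentiableOn.analyticAt (ball_mem_nhds c hR)).contDiffAt
  have hsphere : sphere c R ⊆ closure (ball c R) := by
    rw [closure_ball c hR.ne']
    exact sphere_subset_closedBall
  obtain ⟨C, hC⟩ := J.exists_norm_apply_le_of_continuous_eval (sphere c R) hev fun f =>
    (isCompact_sphere c R).exists_bound_of_continuousOn ((hJ f).continuousOn.mono hsphere)
  refine ⟨(J.iteratedDerivAt n c hsmooth).mkContinuous (n.factorial * C / R ^ n) fun f => ?_,
    fun f => rfl⟩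
  calc ‖iteratedDeriv n (J f) c‖ ≤ n.factorial * (C * ‖f‖) / R ^ n :=
        Complex.norm_iteratedDeriv_le_of_forall_mem_sphere_norm_le n hR (hJ f) (hC f)
    _ = n.factorial * C / R ^ n * ‖f‖ := by ring

/-- Let `E` be a complex Banach space, `r > 0`, and `J : E → (ℂ → ℂ)` a linear map such that
`J f` is analytic on the open disc `B(0,r)` for every `f ∈ E` and all point evaluations
`f ↦ (J f)(z)`, `z ∈ B(0,r)`, are continuous.  Then for each `n ≥ 0` the Taylor-coefficient
functional `k_n(f) = (J f)^{(n)}(0)/n!` is a continuous linear functional on `E`. -/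
theorem taylor_coefficient_functional_continuous
    {E : Type*} [NormedAddCommGroup E] [NormedSpace ℂ E] [CompleteSpace E]
    (r : ℝ) (hr : 0 < r) (J : E →ₗ[ℂ] (ℂ → ℂ))
    (hJa : ∀ f : E, ∀ z ∈ Metric.ball (0 : ℂ) r, AnalyticAt ℂ (J f) z)
    (hJc : ∀ z ∈ Metric.ball (0 : ℂ) r, Continuous fun f : E => J f z)
    (n : ℕ) :
    ∃ K : E →L[ℂ] ℂ, ∀ f : E,
      K f = iteratedDeriv n (J f) 0 / (n.factorial : ℂ) := by
  have hρ : closedBall (0 : ℂ) (r / 2) ⊆ ball 0 r := closedBall_subset_ball (half_lt_self hr)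
  obtain ⟨D, hD⟩ := J.exists_continuousLinearMap_iteratedDeriv_eq (half_pos hr)
    (fun f => DifferentiableOn.diffContOnCl_ball
      (fun z hz => (hJa f z hz).differentiableWithinAt) hρ)
    (fun z hz => hJc z (hρ (sphere_subset_closedBall hz))) n
  exact ⟨(n.factorial : ℂ)⁻¹ • D, fun f => by simp [hD, div_eq_inv_mul]⟩
end

section
/- Fix 1 ≤ p < ∞ and sequences a, b, w : ℕ → ℂ with a_n ≠ 0 and b_n ≠ 0 for all n, and set c_n := w_{n+1} b_n/a_{n+2} − w_n a_n b_{n+1}/(a_{n+1} a_{n+2}). Assume β₁' := sup_n |w_n a_n/a_{n+1}| < ∞, β₁'' := sup_n |c_n| < ∞, and β₂ := ∑_{n=3}^∞ sup_{j ≥ 0} ( |c_j| ∏_{k=3}^n |b_{j+k−1}/a_{j+k}| ) < ∞. Then there exists a continuous linear operator T on X = ℓ^p(ℕ) which represents the weighted forward shift F_w, i.e. for all n, m: (T e_n)_{n+1} = w_n a_n/a_{n+1}; (T e_n)_m = (−1)^{m−n} c_n ∏_{k=0}^{m−n−3} b_{n+2+k}/a_{n+3+k} for m ≥ n+2 (empty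 product = 1); and (T e_n)_m = 0 for m ≤ n. Moreover ‖T‖ ≤ β₁' + β₁'' + β₂. -/
/-!
The matrix of `F_w` is lower triangular, and its `d`-th subdiagonal is the matrix of a weighted
shift by `d`. On every `ℓ^p` such a shift is the composition of a diagonal operator with the
isometric shift, so its norm is at most the supremum of its weights. The hypotheses make the
series of these shifts absolutely convergent in operator norm, and its sum `T` has the required
matrix and, by the triangle inequality, the required norm bound.
-/

open Filter Finset Topology
open scoped ENNReal NNReal

noncomputable section

/-- The auxiliary sequence `c_n = w_{n+1} b_n/a_{n+2} − w_n a_n b_{n+1}/(a_{n+1} a_{n+2})`. -/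
def cseq (a b w : ℕ → ℂ) (n : ℕ) : ℂ :=
  w (n + 1) * b n / a (n + 2) - w n * a n * b (n + 1) / (a (n + 1) * a (n + 2))

/-- `T` represents the weighted forward shift `F_w` on `ℓ^p_{a,b}`, transported to
`ℓ^p(ℕ)` via the basis `f_n(z) = (a_n + b_n z) z^n`:  the matrix of `T` in the standard
unit vectors `e_n` has `w_n a_n/a_{n+1}` on the first subdiagonal, the entries
`(−1)^{m−n} c_n ∏_{k=0}^{m−n−3} b_{n+2+k}/a_{n+3+k}` for `m ≥ n+2`, and zeros on and
above the diagonal. -/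
def RepresentsFw (p : ℝ≥0∞) [Fact (1 ≤ p)] (a b w : ℕ → ℂ)
    (T : lp (fun _ : ℕ => ℂ) p →L[ℂ] lp (fun _ : ℕ => ℂ) p) : Prop :=
  (∀ n : ℕ, (T (lp.single p n 1) : ∀ _ : ℕ, ℂ) (n + 1) = w n * a n / a (n + 1)) ∧
  (∀ n m : ℕ, n + 2 ≤ m →
    (T (lp.single p n 1) : ∀ _ : ℕ, ℂ) m =
      (-1 : ℂ) ^ (m - n) * cseq a b w n *
        ∏ k ∈ Finset.range (m - n - 2), b (n + 2 + k) / a (n + 3 + k)) ∧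
  (∀ n m : ℕ, m ≤ n → (T (lp.single p n 1) : ∀ _ : ℕ, ℂ) m = 0)

open Function

theorem Function.extend_zero_eq_or {α β E : Type*} [Zero E] (g : α → β) (x : α → E) (k : β) :
    (∃ a, g a = k ∧ extend g x 0 k = x a) ∨ extend g x 0 k = 0 := by
  classical
  rw [extend_def]
  split_ifs with h
  · exact Or.inl ⟨_, h.choose_spec, rfl⟩
  · exact Or.inr rfl

section ExtendZero

variable {α β 𝕜 E : Type*} [NormedAddCommGroup E] {g : α → β}

theorem norm_rpow_extend_zero {r : ℝ} (hr : r ≠ 0) (x : α → E) :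
    (fun k => ‖extend g x 0 k‖ ^ r) = extend g (fun a => ‖x a‖ ^ r) 0 := by
  ext k
  rw [apply_extend (fun y : E => ‖y‖ ^ r)]
  congr 1
  ext
  simp [Real.zero_rpow hr]

theorem Memℓp.extend_zero (hg : Injective g) {x : α → E} {p : ℝ≥0∞} (hx : Memℓp x p) :
    Memℓp (extend g x 0) p := by
  rcases p.trichotomy with rfl | rfl | hp
  · refine memℓp_zero ((memℓp_zero_iff.1 hx).image g |>.subset fun k hk => ?_)
    rcases extend_zero_eq_or g x k with ⟨a, rfl, h⟩ | h
    · exact ⟨a, fun hx => hk (h.trans hx), rfl⟩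
    · exact absurd h hk
  · refine memℓp_infty ((memℓp_infty_iff.1 hx).union (bddAbove_singleton (a := 0)) |>.mono ?_)
    rintro _ ⟨k, rfl⟩
    rcases extend_zero_eq_or g x k with ⟨a, -, h⟩ | h
    · exact Or.inl ⟨a, by simp [h]⟩
    · exact Or.inr (by simp [h])
  · apply memℓp_gen
    rw [norm_rpow_extend_zero hp.ne', summable_extend_zero hg]
    exact hx.summable hp

theorem lp.norm_eq_of_coe_eq_extend_zero {p : ℝ≥0∞} (hp : p ≠ 0) (hg : Injective g)
    {x : lp (fun _ : α => E) p} {y : lp (fun _ : β => E) p} (hy : ⇑y = extend g x 0) :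
    ‖y‖ = ‖x‖ := by
  rcases p.trichotomy with rfl | rfl | hp
  · exact absurd rfl hp
  · refine le_antisymm (lp.norm_le_of_forall_le (norm_nonneg x) fun k => ?_)
      (lp.norm_le_of_forall_le (norm_nonneg y) fun a => ?_)
    · rcases extend_zero_eq_or g (⇑x) k with ⟨a, -, h⟩ | h
      · rw [hy, h]
        exact lp.norm_apply_le_norm ENNReal.top_ne_zero x a
      · simp [hy, h]
    · simpa [hy, hg.extend_apply] using lp.norm_apply_le_norm ENNReal.top_ne_zero y (g a)
  · rw [lp.norm_eq_tsum_rpow hp, lp.norm_eq_tsum_rpow hp, hy, norm_rpow_extend_zero hp.ne',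
      tsum_extend_zero hg]

variable [NontriviallyNormedField 𝕜] [NormedSpace 𝕜 E] (𝕜 E) (p : ℝ≥0∞) [Fact (1 ≤ p)]

def lp.extendZero (hg : Injective g) : lp (fun _ : α => E) p →ₗᵢ[𝕜] lp (fun _ : β => E) p where
  toFun x := ⟨extend g x 0, (lp.memℓp x).extend_zero hg⟩
  map_add' x y := by
    ext k
    have h := congrFun (extend_add g (⇑x) (⇑y) 0 0) k
    rw [add_zero] at h
    exact h
  map_smul' c x := by
    ext k
    simpa using congrFun (extend_smul c g (⇑x) 0) k
  norm_map' x := lp.norm_eq_of_coe_eq_extend_zero (zero_lt_one.trans_le Fact.out).ne' hg rfl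

variable {𝕜 E p}

theorem lp.extendZero_apply (hg : Injective g) (x : lp (fun _ : α => E) p) :
    ⇑(lp.extendZero 𝕜 E p hg x) = extend g x 0 :=
  rfl

theorem lp.extendZero_single [DecidableEq α] [DecidableEq β] (hg : Injective g) (a : α) (c : E) :
    lp.extendZero 𝕜 E p hg (lp.single p a c) = lp.single p (g a) c := by
  ext k
  rw [lp.extendZero_apply]
  by_cases hk : ∃ a', g a' = k
  · obtain ⟨a', rfl⟩ := hk
    simp [hg.extend_apply, lp.single_apply, Pi.single_apply, hg.eq_iff]
  · rw [extend_apply' _ _ _ hk, lp.single_apply_ne]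
    · rfl
    · rintro rfl
      exact hk ⟨a, rfl⟩

end ExtendZero

theorem lp.mapCLM_single {α 𝕜 : Type*} [NontriviallyNormedField 𝕜] {E F : α → Type*}
    [∀ i, NormedAddCommGroup (E i)] [∀ i, NormedSpace 𝕜 (E i)]
    [∀ i, NormedAddCommGroup (F i)] [∀ i, NormedSpace 𝕜 (F i)] [DecidableEq α]
    (p : ℝ≥0∞) [Fact (1 ≤ p)] (T : ∀ i, E i →L[𝕜] F i) {K : ℝ} (hK : 0 ≤ K)
    (hTK : ∀ i, ‖T i‖ ≤ K) (i : α) (c : E i) :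
    lp.mapCLM p T hK hTK (lp.single p i c) = lp.single p i (T i c) := by
  ext j
  rw [lp.mapCLM_apply_coe]
  by_cases h : j = i
  · subst h
    simp
  · rw [lp.single_apply_ne _ _ _ h, lp.single_apply_ne _ _ _ h, map_zero]

section WeightedShift

variable {𝕜 : Type*} [NontriviallyNormedField 𝕜] (p : ℝ≥0∞) [Fact (1 ≤ p)]

def weightedShift (d : ℕ) (v : ℕ → 𝕜) (hv : BddAbove (Set.range fun n => ‖v n‖)) :
    lp (fun _ : ℕ => 𝕜) p →L[𝕜] lp (fun _ : ℕ => 𝕜) p :=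
  (lp.extendZero 𝕜 𝕜 p (add_left_injective d)).toContinuousLinearMap.comp
    (lp.mapCLM p (fun n => v n • ContinuousLinearMap.id 𝕜 𝕜)
      (le_ciSup_of_le hv 0 (norm_nonneg _)) fun n => by
        rw [norm_smul, ContinuousLinearMap.norm_id, mul_one]
        exact le_ciSup hv n)

variable {p}

theorem norm_weightedShift_le (d : ℕ) (v : ℕ → 𝕜) (hv : BddAbove (Set.range fun n => ‖v n‖)) :
    ‖weightedShift p d v hv‖ ≤ ⨆ n, ‖v n‖ :=
  (ContinuousLinearMap.opNorm_comp_le _ _).trans <|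
    (mul_le_of_le_one_left (norm_nonneg _) (LinearIsometry.norm_toContinuousLinearMap_le _)).trans
      (lp.norm_mapCLM_le _ _ _ _)

theorem weightedShift_single (d : ℕ) (v : ℕ → 𝕜) (hv : BddAbove (Set.range fun n => ‖v n‖))
    (n : ℕ) (c : 𝕜) :
    weightedShift p d v hv (lp.single p n c) = lp.single p (n + d) (v n * c) := by
  simp [weightedShift, lp.mapCLM_single, lp.extendZero_single]

variable {V : ℕ → ℕ → 𝕜}

theorem norm_tsum_weightedShift_le (hV : ∀ d, BddAbove (Set.range fun n => ‖V d n‖))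
    (hs : Summable fun d => ⨆ n, ‖V d n‖) :
    ‖∑' d, weightedShift p d (V d) (hV d)‖ ≤ ∑' d, ⨆ n, ‖V d n‖ :=
  tsum_of_norm_bounded hs.hasSum fun d => norm_weightedShift_le d (V d) (hV d)

variable [CompleteSpace 𝕜]

theorem summable_weightedShift (hV : ∀ d, BddAbove (Set.range fun n => ‖V d n‖))
    (hs : Summable fun d => ⨆ n, ‖V d n‖) :
    Summable fun d => weightedShift p d (V d) (hV d) :=
  .of_norm_bounded hs fun d => norm_weightedShift_le d (V d) (hV d)

theorem tsum_weightedShift_single_apply (hV : ∀ d, BddAbove (Set.range fun n => ‖V d n‖))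
    (hs : Summable fun d => ⨆ n, ‖V d n‖) (n k : ℕ) :
    (∑' d, weightedShift p d (V d) (hV d)) (lp.single p n 1) k =
      if n ≤ k then V (k - n) n else 0 := by
  have hmap := ((lp.evalCLM 𝕜 (fun _ : ℕ => 𝕜) p k).comp
    (ContinuousLinearMap.apply 𝕜 _ (lp.single p n 1))).map_tsum (summable_weightedShift hV hs)
  simp only [ContinuousLinearMap.comp_apply, ContinuousLinearMap.apply_apply, lp.evalCLM,
    LinearMap.mkContinuous_apply, lp.evalₗ_apply, weightedShift_single, mul_one] at hmap
  rw [hmap]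
  simp only [lp.single_apply, Pi.single_apply]
  split_ifs with hnk
  · rw [tsum_eq_single (k - n) fun d hd => if_neg (by omega), if_pos (by omega)]
  · exact (tsum_congr fun d => if_neg (by omega)).trans tsum_zero

end WeightedShift

/-- `fwSubdiagonal a b w d n` is the entry of the matrix of `F_w` in row `n + d`, column `n`. -/
def fwSubdiagonal (a b w : ℕ → ℂ) : ℕ → ℕ → ℂ
  | 0, _ => 0
  | 1, n => w n * a n / a (n + 1)
  | j + 2, n => (-1) ^ (j + 2) * cseq a b w n * ∏ k ∈ range j, b (n + 2 + k) / a (n + 3 + k)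

theorem fwSubdiagonal_two (a b w : ℕ → ℂ) (n : ℕ) : fwSubdiagonal a b w 2 n = cseq a b w n := by
  simp [fwSubdiagonal]

theorem norm_fwSubdiagonal_add_three (a b w : ℕ → ℂ) (m : ℕ) :
    (fun n => ‖fwSubdiagonal a b w (m + 3) n‖) =
      fun j => ‖cseq a b w j‖ * ∏ i ∈ range (m + 1), ‖b (j + i + 2) / a (j + i + 3)‖ := by
  ext n
  simp only [fwSubdiagonal, norm_mul, norm_pow, norm_neg, norm_one, one_pow, one_mul, norm_prod]
  congr 1
  exact prod_congr rfl fun i _ => by rw [add_right_comm n 2, add_right_comm n 3]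

theorem forward_shift_bounded_general (p : ℝ≥0∞) [Fact (1 ≤ p)]
    (a b w : ℕ → ℂ)
    (h₁ : BddAbove (Set.range fun n : ℕ => ‖w n * a n / a (n + 1)‖))
    (h₂ : BddAbove (Set.range fun n : ℕ => ‖cseq a b w n‖))
    (h₃ : ∀ m : ℕ, BddAbove (Set.range fun j : ℕ =>
      ‖cseq a b w j‖ *
        ∏ i ∈ Finset.range (m + 1), ‖b (j + i + 2) / a (j + i + 3)‖))
    (h₄ : Summable fun m : ℕ => ⨆ j : ℕ,
      ‖cseq a b w j‖ *
        ∏ i ∈ Finset.range (m + 1), ‖b (j + i + 2) / a (j + i + 3)‖) :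
    ∃ T : lp (fun _ : ℕ => ℂ) p →L[ℂ] lp (fun _ : ℕ => ℂ) p,
      RepresentsFw p a b w T ∧
      ‖T‖ ≤ (⨆ n : ℕ, ‖w n * a n / a (n + 1)‖) +
        (⨆ n : ℕ, ‖cseq a b w n‖) +
        ∑' m : ℕ, ⨆ j : ℕ, ‖cseq a b w j‖ *
          ∏ i ∈ Finset.range (m + 1), ‖b (j + i + 2) / a (j + i + 3)‖ := by
  have hV : ∀ d, BddAbove (Set.range fun n => ‖fwSubdiagonal a b w d n‖)
    | 0 => by simp [fwSubdiagonal]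
    | 1 => h₁
    | 2 => by simpa only [fwSubdiagonal_two] using h₂
    | m + 3 => norm_fwSubdiagonal_add_three a b w m ▸ h₃ m
  have hs : Summable fun d => ⨆ n, ‖fwSubdiagonal a b w d n‖ :=
    (summable_nat_add_iff 3).1 (by simpa only [norm_fwSubdiagonal_add_three] using h₄)
  refine ⟨∑' d, weightedShift p d _ (hV d), ⟨fun n => ?_, fun n m hnm => ?_, fun n m hmn => ?_⟩, ?_⟩
  · rw [tsum_weightedShift_single_apply hV hs, if_pos (by omega), Nat.add_sub_cancel_left]
    rfl
  · obtain ⟨j, rfl⟩ : ∃ j, m = n + (j + 2) := ⟨m - n - 2, by omega⟩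
    rw [tsum_weightedShift_single_apply hV hs, if_pos (by omega), Nat.add_sub_cancel_left,
      Nat.add_sub_cancel]
    rfl
  · rw [tsum_weightedShift_single_apply hV hs]
    split_ifs
    · rw [show m - n = 0 by omega]
      rfl
    · rfl
  · refine (norm_tsum_weightedShift_le hV hs).trans_eq ?_
    rw [← hs.sum_add_tsum_nat_add 3]
    simp only [sum_range_succ, range_zero, sum_empty, norm_fwSubdiagonal_add_three,
      fwSubdiagonal_two]
    simp [fwSubdiagonal]

/-- **Boundedness of the weighted forward shift.**  If
`β₁' = sup_n |w_n a_n/a_{n+1}| < ∞`, `β₁'' = sup_n |c_n| < ∞` and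
`β₂ = ∑_{n=3}^∞ sup_j |c_j| ∏_{k=3}^n |b_{j+k−1}/a_{j+k}| < ∞`, then the weighted forward
shift `F_w` is represented by a bounded operator `T` on `ℓ^p(ℕ)` with
`‖T‖ ≤ β₁' + β₁'' + β₂`. -/
theorem forward_shift_bounded (p : ℝ≥0∞) [Fact (1 ≤ p)] (hp' : p ≠ ⊤)
    (a b w : ℕ → ℂ) (ha : ∀ n, a n ≠ 0) (hb : ∀ n, b n ≠ 0)
    (h₁ : BddAbove (Set.range fun n : ℕ => ‖w n * a n / a (n + 1)‖))
    (h₂ : BddAbove (Set.range fun n : ℕ => ‖cseq a b w n‖))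
    (h₃ : ∀ m : ℕ, BddAbove (Set.range fun j : ℕ =>
      ‖cseq a b w j‖ *
        ∏ i ∈ Finset.range (m + 1), ‖b (j + i + 2) / a (j + i + 3)‖))
    (h₄ : Summable fun m : ℕ => ⨆ j : ℕ,
      ‖cseq a b w j‖ *
        ∏ i ∈ Finset.range (m + 1), ‖b (j + i + 2) / a (j + i + 3)‖) :
    ∃ T : lp (fun _ : ℕ => ℂ) p →L[ℂ] lp (fun _ : ℕ => ℂ) p,
      RepresentsFw p a b w T ∧
      ‖T‖ ≤ (⨆ n : ℕ, ‖w n * a n / a (n + 1)‖) +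
        (⨆ n : ℕ, ‖cseq a b w n‖) +
        ∑' m : ℕ, ⨆ j : ℕ, ‖cseq a b w j‖ *
          ∏ i ∈ Finset.range (m + 1), ‖b (j + i + 2) / a (j + i + 3)‖ :=
  forward_shift_bounded_general p a b w h₁ h₂ h₃ h₄
end
end

section
/- In the matrix setting (1 < p < ∞, a_n, b_n, w_n ≠ 0, T : ℓ^p(ℕ) → ℓ^p(ℕ) a continuous linear operator representing the weighted forward shift F_w): if the adjoint T* is hypercyclic (some φ ∈ X* has norm-dense orbit under T*) and ∑_{j=0}^∞ ( ∏_{k=0}^{j−1} |b_k/a_{k+1}| )^p < ∞ (i.e. the constant function 1 belongs to ℓ^p_{a,b}), then the sequence n ↦ ( ∏_{k=0}^{n−1}|w_k| / |a_n| ) · ( 1 + ∑_{j=1}^∞ ( ∏_{k=0}^{j−1} |b_{n+k}/a_{n+k+1}| )^p )^{1/p} is unbounded. -/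
open Filter Finset Topology
open scoped ENNReal NNReal

noncomputable section

/-!
Let `x₀ ∈ ℓ^p` be the coordinate vector of the constant function `1 = z^0` in the basis
`f_m = (a_m + b_m z) z^m` of `ℓ^p_{a,b}`. Since `F_w z^n = w_n z^(n+1)`, one has
`T^n x₀ = (∏_{k<n} w_k) x_n` with `x_n` the coordinates of `z^n`, and `‖T^n x₀‖` is exactly the
displayed quantity. If it were bounded, so would be `{φ (T^n x₀)}`; but evaluation at `x₀ ≠ 0` is a
continuous surjection `X* → ℂ`, so it maps the dense `T*`-orbit of `φ` onto a dense subset of `ℂ`.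
-/

theorem not_bddAbove_norm_orbit_of_dense_comp_pow {𝕜 E : Type*} [RCLike 𝕜]
    [NormedAddCommGroup E] [NormedSpace 𝕜 E] {T : E →L[𝕜] E} {φ : E →L[𝕜] 𝕜}
    (hφ : Dense (Set.range fun n : ℕ => φ.comp (T ^ n))) {x : E} (hx : x ≠ 0) :
    ¬ BddAbove (Set.range fun n : ℕ => ‖(T ^ n) x‖) := by
  rintro ⟨C, hC⟩
  obtain ⟨f, hf⟩ := SeparatingDual.exists_eq_one (R := 𝕜) hx
  have hsurj : Function.Surjective fun ψ : E →L[𝕜] 𝕜 => ψ x :=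
    fun t => ⟨t • f, by simp [hf]⟩
  have hdense : Dense (Set.range fun n : ℕ => φ ((T ^ n) x)) := by
    have := hsurj.denseRange.dense_image (by fun_prop) hφ
    rwa [← Set.range_comp] at this
  have hbdd : Bornology.IsBounded (Set.range fun n : ℕ => φ ((T ^ n) x)) := by
    refine isBounded_iff_forall_norm_le.2 ⟨‖φ‖ * C, ?_⟩
    rintro _ ⟨n, rfl⟩
    exact (φ.le_opNorm _).trans (by gcongr; exact hC ⟨n, rfl⟩)
  exact NormedSpace.unbounded_univ 𝕜 𝕜 (hdense.closure_eq ▸ hbdd.closure)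

theorem lp.hasSum_mul_apply_single {ι 𝕜 : Type*} [DecidableEq ι] [NormedField 𝕜]
    {p : ℝ≥0∞} [Fact (1 ≤ p)] (hp : p ≠ ⊤)
    (T : lp (fun _ : ι => 𝕜) p →L[𝕜] lp (fun _ : ι => 𝕜) p) (f : lp (fun _ : ι => 𝕜) p)
    (m : ι) : HasSum (fun j => f j * T (lp.single p j 1) m) (T f m) := by
  have h : HasSum (fun j => lp.evalCLM 𝕜 (fun _ : ι => 𝕜) p m (T (lp.single p j (f j))))
      (T f m) := ((lp.evalCLM 𝕜 (fun _ : ι => 𝕜) p m).comp T).hasSum (lp.hasSum_single hp f)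
  convert h using 1
  funext j
  have hs : (lp.single p j (f j) : lp (fun _ : ι => 𝕜) p) = f j • lp.single p j 1 := by
    rw [← lp.single_smul, smul_eq_mul, mul_one]
  rw [hs, map_smul, map_smul]
  rfl

theorem summable_prod_range_add_rpow {q : ℕ → ℝ} (hq : ∀ k, 0 < q k) {r : ℝ}
    (h : Summable fun j => (∏ k ∈ range j, q k) ^ r) (n : ℕ) :
    Summable fun j => (∏ k ∈ range j, q (n + k)) ^ r := by
  have hn : 0 < ∏ k ∈ range n, q k := prod_pos fun k _ => hq k
  refine (((summable_nat_add_iff n).2 h).div_const ((∏ k ∈ range n, q k) ^ r)).congr fun j => ?_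
  rw [add_comm j n, prod_range_add, Real.mul_rpow hn.le (prod_nonneg fun k _ => (hq _).le),
    mul_div_cancel_left₀ _ (Real.rpow_pos_of_pos hn r).ne']

-- The entries `w r * a r / a (r + 1)` of the subdiagonal of `T` enter here: this identity is what
-- lets `T f` inherit the recurrence `f (r + 1) = -(b r / a (r + 1)) * f r` in `apply_succ_succ`.
theorem cseq_eq_sub {a : ℕ → ℂ} (b w : ℕ → ℂ) {r : ℕ} (ha : a (r + 1) ≠ 0) :
    cseq a b w r = b r / a (r + 1) * (w (r + 1) * a (r + 1) / a (r + 2)) -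
      b (r + 1) / a (r + 2) * (w r * a r / a (r + 1)) := by
  unfold cseq
  field_simp

-- Coordinates of `z^n` in the basis `f_m = (a_m + b_m z) z^m`: the sum
-- `∑_{m ≥ n} monomialCoord a b n m • f_m` telescopes to `z^n`.
def monomialCoord (a b : ℕ → ℂ) (n m : ℕ) : ℂ :=
  if n ≤ m then (-1) ^ (m - n) * (∏ k ∈ range (m - n), b (n + k) / a (n + k + 1)) / a n else 0

section monomialCoord

variable (a b : ℕ → ℂ) {n m : ℕ}

theorem monomialCoord_of_lt (h : m < n) : monomialCoord a b n m = 0 :=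
  if_neg (not_le.2 h)

theorem monomialCoord_self : monomialCoord a b n n = (a n)⁻¹ := by
  simp [monomialCoord]

theorem monomialCoord_succ (h : n ≤ m) :
    monomialCoord a b n (m + 1) = -(b m / a (m + 1)) * monomialCoord a b n m := by
  obtain ⟨j, rfl⟩ := Nat.exists_eq_add_of_le h
  rw [monomialCoord, monomialCoord, if_pos (by omega), if_pos h, Nat.add_sub_cancel_left,
    show n + j + 1 - n = j + 1 by omega, prod_range_succ, pow_succ]
  ring

theorem norm_monomialCoord_add (j : ℕ) :
    ‖monomialCoord a b n (n + j)‖ = (∏ k ∈ range j, ‖b (n + k) / a (n + k + 1)‖) / ‖a n‖ := by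
  simp [monomialCoord, norm_prod]

end monomialCoord

section monomialVec

variable {a b : ℕ → ℂ} {r : ℝ}

def monomialVec {p : ℝ≥0∞} (hmem : ∀ n, Memℓp (monomialCoord a b n) p) (n : ℕ) :
    lp (fun _ : ℕ => ℂ) p :=
  ⟨monomialCoord a b n, hmem n⟩

theorem summable_norm_monomialCoord_add_rpow (ha : ∀ n, a n ≠ 0) (hb : ∀ n, b n ≠ 0)
    (hone : Summable fun j => (∏ k ∈ range j, ‖b k / a (k + 1)‖) ^ r) (n : ℕ) :
    Summable fun j => ‖monomialCoord a b n (j + n)‖ ^ r := by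
  have h := summable_prod_range_add_rpow (q := fun k => ‖b k / a (k + 1)‖)
    (fun k => norm_pos_iff.2 (div_ne_zero (hb k) (ha (k + 1)))) hone n
  refine (h.div_const (‖a n‖ ^ r)).congr fun j => ?_
  rw [add_comm, norm_monomialCoord_add, Real.div_rpow (prod_nonneg fun _ _ => norm_nonneg _)
    (norm_nonneg _)]

theorem tsum_norm_monomialCoord_rpow (hr : r ≠ 0) (ha : ∀ n, a n ≠ 0) (hb : ∀ n, b n ≠ 0)
    (hone : Summable fun j => (∏ k ∈ range j, ‖b k / a (k + 1)‖) ^ r) (n : ℕ) :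
    ∑' m, ‖monomialCoord a b n m‖ ^ r =
      (1 + ∑' j, (∏ k ∈ range (j + 1), ‖b (n + k) / a (n + k + 1)‖) ^ r) / ‖a n‖ ^ r := by
  have hhead : ∑ m ∈ range n, ‖monomialCoord a b n m‖ ^ r = 0 := sum_eq_zero fun m hm => by
    rw [monomialCoord_of_lt a b (mem_range.1 hm), norm_zero, Real.zero_rpow hr]
  have htail : ∑' j, ‖monomialCoord a b n (j + n)‖ ^ r =
      ∑' j, (∏ k ∈ range j, ‖b (n + k) / a (n + k + 1)‖) ^ r / ‖a n‖ ^ r := tsum_congr fun j => by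
    rw [add_comm, norm_monomialCoord_add, Real.div_rpow (prod_nonneg fun _ _ => norm_nonneg _)
      (norm_nonneg _)]
  have hsplit := (summable_prod_range_add_rpow
    (fun k => norm_pos_iff.2 (div_ne_zero (hb k) (ha (k + 1)))) hone n).tsum_eq_zero_add
  have hshift := Summable.sum_add_tsum_nat_add' (f := fun m => ‖monomialCoord a b n m‖ ^ r)
    (summable_norm_monomialCoord_add_rpow ha hb hone n)
  rw [hhead, zero_add] at hshift
  rw [← hshift, htail, tsum_div_const, hsplit]
  simp

theorem memℓp_monomialCoord {p : ℝ≥0∞} (ha : ∀ n, a n ≠ 0) (hb : ∀ n, b n ≠ 0)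
    (hone : Summable fun j => (∏ k ∈ range j, ‖b k / a (k + 1)‖) ^ p.toReal) (n : ℕ) :
    Memℓp (monomialCoord a b n) p :=
  memℓp_gen <| (summable_nat_add_iff n).1 (summable_norm_monomialCoord_add_rpow ha hb hone n)

theorem norm_monomialVec {p : ℝ≥0∞} [Fact (1 ≤ p)] (hp : p ≠ ⊤) (ha : ∀ n, a n ≠ 0)
    (hb : ∀ n, b n ≠ 0)
    (hone : Summable fun j => (∏ k ∈ range j, ‖b k / a (k + 1)‖) ^ p.toReal) (n : ℕ) :
    ‖monomialVec (memℓp_monomialCoord ha hb hone) n‖ =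
      (1 + ∑' j, (∏ k ∈ range (j + 1), ‖b (n + k) / a (n + k + 1)‖) ^ p.toReal) ^ (1 / p.toReal)
        / ‖a n‖ := by
  have hp0 : 0 < p.toReal := ENNReal.toReal_pos (zero_lt_one.trans_le Fact.out).ne' hp
  have hS : 0 ≤ 1 + ∑' j, (∏ k ∈ range (j + 1), ‖b (n + k) / a (n + k + 1)‖) ^ p.toReal := by
    positivity
  rw [lp.norm_eq_tsum_rpow hp0]
  change (∑' m, ‖monomialCoord a b n m‖ ^ p.toReal) ^ (1 / p.toReal) = _
  rw [tsum_norm_monomialCoord_rpow hp0.ne' ha hb hone, Real.div_rpow hS (by positivity),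
    ← Real.rpow_mul (norm_nonneg _), mul_one_div_cancel hp0.ne', Real.rpow_one]

end monomialVec

namespace RepresentsFw

variable {p : ℝ≥0∞} [Fact (1 ≤ p)] {a b w : ℕ → ℂ}
  {T : lp (fun _ : ℕ => ℂ) p →L[ℂ] lp (fun _ : ℕ => ℂ) p}

theorem apply_eq_sum (hT : RepresentsFw p a b w T) (hp : p ≠ ⊤) (f : lp (fun _ : ℕ => ℂ) p)
    (m : ℕ) : T f m = ∑ j ∈ range m, f j * T (lp.single p j 1) m := by
  refine (lp.hasSum_mul_apply_single hp T f m).unique (hasSum_sum_of_ne_finset_zero ?_)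
  intro j hj
  rw [hT.2.2 j m (not_lt.1 (mt mem_range.2 hj)), mul_zero]

theorem apply_single_succ (hT : RepresentsFw p a b w T) {j m : ℕ} (h : j + 2 ≤ m) :
    T (lp.single p j 1) (m + 1) = -(b m / a (m + 1)) * T (lp.single p j 1) m := by
  rw [hT.2.1 j (m + 1) (by omega), hT.2.1 j m h, show m + 1 - j = m - j + 1 by omega,
    show m - j + 1 - 2 = m - j - 2 + 1 by omega, prod_range_succ, pow_succ,
    show j + 2 + (m - j - 2) = m by omega, show j + 3 + (m - j - 2) = m + 1 by omega]
  ring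

theorem apply_succ_succ (hT : RepresentsFw p a b w T) (hp : p ≠ ⊤) (f : lp (fun _ : ℕ => ℂ) p)
    {r : ℕ} (ha : a (r + 1) ≠ 0) (hf : f (r + 1) = -(b r / a (r + 1)) * f r) :
    T f (r + 2) = -(b (r + 1) / a (r + 2)) * T f (r + 1) := by
  have hcol : ∀ j ∈ range r, f j * T (lp.single p j 1) (r + 2) =
      -(b (r + 1) / a (r + 2)) * (f j * T (lp.single p j 1) (r + 1)) := fun j hj => by
    rw [hT.apply_single_succ (by rw [mem_range] at hj; omega)]
    ring
  have hdiag : T (lp.single p r 1) (r + 2) = cseq a b w r := by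
    simp [hT.2.1 r (r + 2) le_rfl]
  rw [hT.apply_eq_sum hp, hT.apply_eq_sum hp, sum_range_succ, sum_range_succ, sum_range_succ,
    sum_congr rfl hcol, ← mul_sum, hT.1 r, hT.1 (r + 1), hdiag, hf, cseq_eq_sub b w ha]
  ring

theorem apply_monomialVec (hT : RepresentsFw p a b w T) (hp : p ≠ ⊤) (ha : ∀ n, a n ≠ 0)
    (hmem : ∀ n, Memℓp (monomialCoord a b n) p) (n : ℕ) :
    T (monomialVec hmem n) = w n • monomialVec hmem (n + 1) := by
  set x := monomialVec hmem n
  have hlow : ∀ m ≤ n, T x m = 0 := fun m hm => by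
    rw [hT.apply_eq_sum hp]
    refine sum_eq_zero fun j hj => ?_
    rw [show x j = 0 from monomialCoord_of_lt a b (by rw [mem_range] at hj; omega), zero_mul]
  have hsub : T x (n + 1) = w n * monomialCoord a b (n + 1) (n + 1) := by
    rw [hT.apply_eq_sum hp, sum_range_succ, sum_eq_zero fun j hj => ?_, hT.1 n,
      show x n = (a n)⁻¹ from monomialCoord_self a b, monomialCoord_self]
    · rw [zero_add]
      field_simp [ha n]
    · rw [show x j = 0 from monomialCoord_of_lt a b (by simpa using hj), zero_mul]
  have htail : ∀ j, T x (n + 1 + j) = w n * monomialCoord a b (n + 1) (n + 1 + j) := by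
    intro j
    induction j with
    | zero => exact hsub
    | succ j ih =>
      rw [show n + 1 + (j + 1) = n + j + 2 by omega,
        hT.apply_succ_succ hp x (ha _) (monomialCoord_succ a b (Nat.le_add_right n j)),
        show n + j + 1 = n + 1 + j by omega, ih, show n + j + 2 = n + 1 + j + 1 by omega,
        monomialCoord_succ a b (Nat.le_add_right _ j)]
      ring
  ext m
  rw [lp.coeFn_smul, Pi.smul_apply, smul_eq_mul]
  rcases le_or_gt m n with hm | hm
  · rw [hlow m hm, show (monomialVec hmem (n + 1) : ℕ → ℂ) m = 0 from
      monomialCoord_of_lt a b (by omega), mul_zero]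
  · obtain ⟨j, rfl⟩ := Nat.exists_eq_add_of_le (Nat.succ_le_of_lt hm)
    exact htail j

theorem pow_apply_monomialVec (hT : RepresentsFw p a b w T) (hp : p ≠ ⊤) (ha : ∀ n, a n ≠ 0)
    (hmem : ∀ n, Memℓp (monomialCoord a b n) p) (n : ℕ) :
    (T ^ n) (monomialVec hmem 0) = (∏ k ∈ range n, w k) • monomialVec hmem n := by
  induction n with
  | zero => simp
  | succ n ih =>
    rw [pow_succ', mul_apply_eq_comp, ih, map_smul, hT.apply_monomialVec hp ha,
      smul_smul, prod_range_succ, mul_comm]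

end RepresentsFw

theorem adjoint_hypercyclic_necessary_general (p : ℝ≥0∞) [Fact (1 ≤ p)]
    (hp' : p ≠ ⊤)
    (a b w : ℕ → ℂ) (ha : ∀ n, a n ≠ 0) (hb : ∀ n, b n ≠ 0)
    (T : lp (fun _ : ℕ => ℂ) p →L[ℂ] lp (fun _ : ℕ => ℂ) p)
    (hT : RepresentsFw p a b w T)
    (hhc : ∃ φ : lp (fun _ : ℕ => ℂ) p →L[ℂ] ℂ,
      Dense (Set.range fun n : ℕ => φ.comp (T ^ n)))
    (hone : Summable fun j : ℕ =>
      (∏ k ∈ Finset.range j, ‖b k / a (k + 1)‖) ^ p.toReal) :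
    ¬ BddAbove (Set.range fun n : ℕ =>
      ((∏ k ∈ Finset.range n, ‖w k‖) / ‖a n‖) *
        (1 + ∑' j : ℕ,
          (∏ k ∈ Finset.range (j + 1),
            ‖b (n + k) / a (n + k + 1)‖) ^ p.toReal) ^ (1 / p.toReal)) := by
  obtain ⟨φ, hφ⟩ := hhc
  have hmem := memℓp_monomialCoord ha hb hone
  have hx : monomialVec hmem 0 ≠ 0 := fun h => by
    have h0 := congr_arg (fun f : lp (fun _ : ℕ => ℂ) p => f 0) h
    exact inv_ne_zero (ha 0) ((monomialCoord_self a b).symm.trans h0)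
  convert not_bddAbove_norm_orbit_of_dense_comp_pow hφ hx using 4 with n
  rw [hT.pow_apply_monomialVec hp' ha, norm_smul, norm_monomialVec hp' ha hb hone, norm_prod]
  ring

/-- **Necessary condition for hypercyclicity of `F_w^*`.**  If the adjoint `T*` of the
weighted forward shift is hypercyclic and the constant function `1` belongs to `ℓ^p_{a,b}`
(i.e. `∑_j (∏_{k<j}|b_k/a_{k+1}|)^p < ∞`), then
`n ↦ (∏_{k<n}|w_k|/|a_n|)·(1 + ∑_{j≥1}(∏_{k<j}|b_{n+k}/a_{n+k+1}|)^p)^{1/p}` is unbounded. -/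
theorem adjoint_hypercyclic_necessary (p : ℝ≥0∞) [Fact (1 ≤ p)]
    (hp : 1 < p) (hp' : p ≠ ⊤)
    (a b w : ℕ → ℂ) (ha : ∀ n, a n ≠ 0) (hb : ∀ n, b n ≠ 0) (hw : ∀ n, w n ≠ 0)
    (T : lp (fun _ : ℕ => ℂ) p →L[ℂ] lp (fun _ : ℕ => ℂ) p)
    (hT : RepresentsFw p a b w T)
    (hhc : ∃ φ : lp (fun _ : ℕ => ℂ) p →L[ℂ] ℂ,
      Dense (Set.range fun n : ℕ => φ.comp (T ^ n)))
    (hone : Summable fun j : ℕ =>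
      (∏ k ∈ Finset.range j, ‖b k / a (k + 1)‖) ^ p.toReal) :
    ¬ BddAbove (Set.range fun n : ℕ =>
      ((∏ k ∈ Finset.range n, ‖w k‖) / ‖a n‖) *
        (1 + ∑' j : ℕ,
          (∏ k ∈ Finset.range (j + 1),
            ‖b (n + k) / a (n + k + 1)‖) ^ p.toReal) ^ (1 / p.toReal)) :=
  adjoint_hypercyclic_necessary_general p hp' a b w ha hb T hT hhc hone
end
end

section
/- In the matrix setting (1 < p < ∞, a_n, b_n, w_n ≠ 0, T : ℓ^p(ℕ) → ℓ^p(ℕ) a continuous linear operator representing the weighted forward shift F_w): the adjoint T* is always supercyclic, i.e. there exists φ ∈ (ℓ^p(ℕ))* such that the set {c · (T*)^n φ : c ∈ ℂ, n ∈ ℕ} is norm-dense in (ℓ^p(ℕ))*. -/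
open Filter Finset Topology
open scoped ENNReal NNReal

noncomputable section

/-!
The coordinate functionals `e_j^*` span a dense subspace `D` of the dual of `ℓ^p`: the tails
`f ∘ Q_N` of a functional (`Q_N` kills the first `N` coordinates) have norms whose infimum `L`
satisfies `2 L ≤ 2^{1/p} L`, by testing `f` on two disjointly supported unit vectors, so `L = 0`
when `p > 1`. Since `T e_n` is supported in `(n, ∞)` with nonzero entry at `n + 1`, we get
`T* e_j^* = ∑_{m < j} T_{jm} e_m^*` with `T_{j+1,j} ≠ 0`; hence `T*` is locally nilpotent on `D`
and every `(T*)^n` maps `D` onto `D`. Given open `U`, `V`, pick `x ∈ U ∩ D` with `(T*)^N x = 0` and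
`y = (T*)^N u ∈ V ∩ D`: then `x + δ u ∈ U` for small `δ ≠ 0` and `δ⁻¹ (T*)^N (x + δ u) = y`.
Baire's theorem in the separable dual turns this transitivity into a dense projective orbit.
-/

theorem exists_dense_range_of_forall_inter_preimage_nonempty {X ι : Type*} [TopologicalSpace X]
    [BaireSpace X] [SecondCountableTopology X] [Nonempty X] (f : ι → X → X)
    (hf : ∀ i, Continuous (f i))
    (htrans : ∀ U V : Set X, IsOpen U → IsOpen V → U.Nonempty → V.Nonempty →
      ∃ i, (U ∩ f i ⁻¹' V).Nonempty) :
    ∃ x, Dense (Set.range fun i ↦ f i x) := by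
  obtain ⟨B, hBc, hBne, hB⟩ := TopologicalSpace.exists_countable_basis X
  have hdense : Dense (⋂ V ∈ B, ⋃ i, f i ⁻¹' V) := by
    refine dense_biInter_of_isOpen
      (fun V hV ↦ isOpen_iUnion fun i ↦ (hB.isOpen hV).preimage (hf i)) hBc fun V hV ↦ ?_
    refine dense_iff_inter_open.2 fun U hU hUne ↦ ?_
    obtain ⟨i, x, hxU, hxV⟩ := htrans U V hU (hB.isOpen hV) hUne
      (Set.nonempty_iff_ne_empty.2 fun h ↦ hBne (h ▸ hV))
    exact ⟨x, hxU, Set.mem_iUnion.2 ⟨i, hxV⟩⟩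
  obtain ⟨x, hx⟩ := hdense.nonempty
  refine ⟨x, hB.dense_iff.2 fun V hV _ ↦ ?_⟩
  obtain ⟨i, hi⟩ := Set.mem_iUnion.1 (Set.mem_iInter₂.1 hx V hV)
  exact ⟨f i x, hi, i, rfl⟩

theorem exists_dense_range_smul_pow_apply {𝕜 E : Type*} [NontriviallyNormedField 𝕜]
    [NormedAddCommGroup E] [NormedSpace 𝕜 E] [CompleteSpace E]
    [TopologicalSpace.SeparableSpace E] (A : E →L[𝕜] E) {D : Set E} (hD : Dense D)
    (hnil : ∀ x ∈ D, ∃ N, (A ^ N) x = 0) (hsurj : ∀ n, ∀ y ∈ D, ∃ u, (A ^ n) u = y) :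
    ∃ x, Dense (Set.range fun cn : 𝕜 × ℕ ↦ cn.1 • (A ^ cn.2) x) := by
  refine exists_dense_range_of_forall_inter_preimage_nonempty _
    (fun cn ↦ (A ^ cn.2).continuous.const_smul cn.1) fun U V hU hV hUne hVne ↦ ?_
  obtain ⟨x, hxD, hxU⟩ := hD.exists_mem_open hU hUne
  obtain ⟨y, hyD, hyV⟩ := hD.exists_mem_open hV hVne
  obtain ⟨N, hN⟩ := hnil x hxD
  obtain ⟨u, hu⟩ := hsurj N y hyD
  have hlim : Tendsto (fun δ : 𝕜 ↦ x + δ • u) (𝓝[≠] 0) (𝓝 x) := by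
    simpa using ((continuous_id.smul continuous_const).const_add x).tendsto' (0 : 𝕜) x
      (by simp) |>.mono_left nhdsWithin_le_nhds
  obtain ⟨δ, hδU, hδ⟩ := ((hlim.eventually (hU.mem_nhds hxU)).and self_mem_nhdsWithin).exists
  refine ⟨(δ⁻¹, N), x + δ • u, hδU, ?_⟩
  rwa [Set.mem_preimage, map_add, map_smul, hN, hu, zero_add, smul_smul,
    inv_mul_cancel₀ (show δ ≠ 0 from hδ), one_smul]

section

open Submodule

variable {R M : Type*} [Semiring R] [AddCommMonoid M] [Module R M] {A : M →ₗ[R] M}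
  {e : ℕ → M} {t : ℕ → ℕ → R}

theorem map_span_image_Iio_succ_le (hA : ∀ j, A (e j) = ∑ m ∈ range j, t j m • e m) (j : ℕ) :
    (span R (e '' Set.Iio (j + 1))).map A ≤ span R (e '' Set.Iio j) := by
  rw [map_span_le]
  rintro _ ⟨m, hm, rfl⟩
  rw [hA]
  refine sum_mem fun i hi ↦ smul_mem _ _ (subset_span ⟨i, ?_, rfl⟩)
  simp only [Finset.mem_range, Set.mem_Iio] at hi hm ⊢
  omega

theorem pow_apply_eq_zero_of_mem_span_image_Iio
    (hA : ∀ j, A (e j) = ∑ m ∈ range j, t j m • e m) :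
    ∀ j, ∀ x ∈ span R (e '' Set.Iio j), (A ^ j) x = 0
  | 0, x, hx => by simpa using hx
  | j + 1, x, hx => by
    rw [pow_succ, Module.End.mul_apply]
    exact pow_apply_eq_zero_of_mem_span_image_Iio hA j _
      (map_span_image_Iio_succ_le hA j (mem_map_of_mem hx))

theorem exists_pow_apply_eq_zero_of_mem_span
    (hA : ∀ j, A (e j) = ∑ m ∈ range j, t j m • e m) {x : M} (hx : x ∈ span R (Set.range e)) :
    ∃ N, (A ^ N) x = 0 := by
  have hmono : Monotone fun j ↦ span R (e '' Set.Iio j) :=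
    fun i j hij ↦ span_mono (Set.image_mono (Set.Iio_subset_Iio hij))
  rw [← Set.image_univ, ← Set.iUnion_Iio, Set.image_iUnion, span_iUnion,
    mem_iSup_of_directed _ hmono.directed_le] at hx
  obtain ⟨j, hj⟩ := hx
  exact ⟨j, pow_apply_eq_zero_of_mem_span_image_Iio hA j x hj⟩

end

section

open Submodule

variable {K M : Type*} [DivisionRing K] [AddCommGroup M] [Module K M] {A : M →ₗ[K] M}
  {e : ℕ → M} {t : ℕ → ℕ → K}

theorem span_range_le_map (hA : ∀ j, A (e j) = ∑ m ∈ range j, t j m • e m)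
    (ht : ∀ j, t (j + 1) j ≠ 0) : span K (Set.range e) ≤ (span K (Set.range e)).map A := by
  rw [span_le]
  rintro _ ⟨j, rfl⟩
  induction j using Nat.strong_induction_on with
  | _ j ih =>
    have hej : e j = (t (j + 1) j)⁻¹ •
        (A (e (j + 1)) - ∑ m ∈ range j, t (j + 1) m • e m) := by
      rw [hA, sum_range_succ, add_sub_cancel_left, smul_smul, inv_mul_cancel₀ (ht j), one_smul]
    rw [hej]
    exact smul_mem _ _ (sub_mem (mem_map_of_mem (subset_span ⟨j + 1, rfl⟩))
      (sum_mem fun m hm ↦ smul_mem _ _ (ih m (Finset.mem_range.1 hm))))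

theorem span_range_le_map_pow (hA : ∀ j, A (e j) = ∑ m ∈ range j, t j m • e m)
    (ht : ∀ j, t (j + 1) j ≠ 0) (n : ℕ) :
    span K (Set.range e) ≤ (span K (Set.range e)).map (A ^ n) := by
  induction n with
  | zero => rw [pow_zero, Module.End.one_eq_id, Submodule.map_id]
  | succ n ih =>
    rw [pow_succ, Module.End.mul_eq_comp, map_comp]
    exact ih.trans (map_mono (span_range_le_map hA ht))

end

theorem RCLike.exists_norm_eq_one_mul_eq_norm {𝕜 : Type*} [RCLike 𝕜] (z : 𝕜) :
    ∃ c : 𝕜, ‖c‖ = 1 ∧ c * z = ‖z‖ := by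
  rcases eq_or_ne z 0 with rfl | hz
  · exact ⟨1, by simp, by simp⟩
  · refine ⟨starRingEnd 𝕜 z / ‖z‖, by simp [hz], ?_⟩
    rw [div_mul_eq_mul_div, RCLike.conj_mul, sq, mul_div_assoc,
      div_self (RCLike.ofReal_ne_zero.2 (norm_ne_zero_iff.2 hz)), mul_one]

namespace lp

theorem norm_add_rpow_of_disjoint {α : Type*} {E : α → Type*} [∀ i, NormedAddCommGroup (E i)]
    {p : ℝ≥0∞} (hp : 0 < p.toReal) {u v : lp E p} (huv : ∀ i, u i = 0 ∨ v i = 0) :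
    ‖u + v‖ ^ p.toReal = ‖u‖ ^ p.toReal + ‖v‖ ^ p.toReal := by
  rw [lp.norm_rpow_eq_tsum hp (u + v), lp.norm_rpow_eq_tsum hp u, lp.norm_rpow_eq_tsum hp v,
    ← ((lp.memℓp u).summable hp).tsum_add ((lp.memℓp v).summable hp)]
  refine tsum_congr fun i ↦ ?_
  rcases huv i with h | h <;> simp [h, Real.zero_rpow hp.ne']

theorem norm_apply_add_norm_apply_le {α 𝕜 : Type*} [RCLike 𝕜] {E : α → Type*}
    [∀ i, NormedAddCommGroup (E i)] [∀ i, NormedSpace 𝕜 (E i)] {p : ℝ≥0∞} [Fact (1 ≤ p)]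
    (hp : p ≠ ⊤) (g : lp E p →L[𝕜] 𝕜) {u v : lp E p} (hu : ‖u‖ ≤ 1) (hv : ‖v‖ ≤ 1)
    (huv : ∀ i, u i = 0 ∨ v i = 0) : ‖g u‖ + ‖g v‖ ≤ 2 ^ p.toReal⁻¹ * ‖g‖ := by
  have hp0 : 0 < p.toReal :=
    ENNReal.toReal_pos (zero_lt_one.trans_le Fact.out).ne' hp
  obtain ⟨α, hα, hαu⟩ := RCLike.exists_norm_eq_one_mul_eq_norm (g u)
  obtain ⟨β, hβ, hβv⟩ := RCLike.exists_norm_eq_one_mul_eq_norm (g v)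
  have hz : ‖α • u + β • v‖ ≤ 2 ^ p.toReal⁻¹ := by
    rw [Real.le_rpow_inv_iff_of_pos (norm_nonneg _) zero_le_two hp0,
      norm_add_rpow_of_disjoint hp0 fun i ↦ (huv i).imp (by simp [·]) (by simp [·]),
      norm_smul, norm_smul, hα, hβ, one_mul, one_mul]
    linarith [Real.rpow_le_one (norm_nonneg u) hu hp0.le,
      Real.rpow_le_one (norm_nonneg v) hv hp0.le]
  calc ‖g u‖ + ‖g v‖ = ‖g (α • u + β • v)‖ := by
        rw [map_add, map_smul, map_smul, smul_eq_mul, smul_eq_mul, hαu, hβv,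
          ← RCLike.ofReal_add, RCLike.norm_of_nonneg (by positivity)]
    _ ≤ ‖g‖ * ‖α • u + β • v‖ := g.le_opNorm _
    _ ≤ 2 ^ p.toReal⁻¹ * ‖g‖ := by rw [mul_comm]; gcongr

theorem single_eq_smul_single_one {α 𝕜 : Type*} [DecidableEq α] [NormedField 𝕜] (p : ℝ≥0∞)
    (i : α) (c : 𝕜) : lp.single p i c = c • (lp.single p i 1 : lp (fun _ : α ↦ 𝕜) p) := by
  rw [← lp.single_smul, smul_eq_mul, mul_one]

theorem continuousLinearMap_ext_single {α 𝕜 F : Type*} [DecidableEq α] [NormedField 𝕜]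
    [NormedAddCommGroup F] [NormedSpace 𝕜 F] {p : ℝ≥0∞} [Fact (1 ≤ p)] (hp : p ≠ ⊤)
    {f g : lp (fun _ : α ↦ 𝕜) p →L[𝕜] F} (h : ∀ i, f (lp.single p i 1) = g (lp.single p i 1)) :
    f = g := by
  ext x
  refine ((lp.hasSum_single hp x).mapL f).unique ?_
  simpa only [single_eq_smul_single_one p _ (x _), map_smul, h] using
    (lp.hasSum_single hp x).mapL g

variable {𝕜 : Type*} [RCLike 𝕜] {p : ℝ≥0∞}

local notation "ℓp" => lp (fun _ : ℕ ↦ 𝕜) p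

theorem sum_range_single_apply (N : ℕ) (x : ℓp) (j : ℕ) :
    (∑ n ∈ range N, lp.single p n (x n) : ℓp) j = if j < N then x j else 0 := by
  simp only [coeFn_sum, Finset.sum_apply, lp.single_apply, Pi.single_apply]
  simp

theorem sub_sum_range_single_apply (N : ℕ) (x : ℓp) (j : ℕ) :
    (x - ∑ n ∈ range N, lp.single p n (x n) : ℓp) j = if j < N then 0 else x j := by
  rw [coeFn_sub, Pi.sub_apply, sum_range_single_apply]
  split_ifs <;> simp

variable [Fact (1 ≤ p)]

def dualTail (f : ℓp →L[𝕜] 𝕜) (N : ℕ) : ℓp →L[𝕜] 𝕜 :=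
  f - ∑ n ∈ range N, f (lp.single p n 1) • evalCLM 𝕜 (fun _ ↦ 𝕜) p n

theorem dualTail_apply (f : ℓp →L[𝕜] 𝕜) (N : ℕ) (x : ℓp) :
    dualTail f N x = f (x - ∑ n ∈ range N, lp.single p n (x n)) := by
  simp [dualTail, single_eq_smul_single_one p _ (x _), evalCLM, mul_comm]

theorem dualTail_apply_of_forall_lt_eq_zero (f : ℓp →L[𝕜] 𝕜) {N : ℕ} {x : ℓp}
    (hx : ∀ j < N, x j = 0) : dualTail f N x = f x := by
  rw [dualTail_apply, sum_eq_zero fun n hn ↦ by rw [hx n (Finset.mem_range.1 hn), lp.single_zero],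
    sub_zero]

theorem exists_tail_lt_norm_apply {f : ℓp →L[𝕜] 𝕜} {N : ℕ} {r : ℝ} (hr : r < ‖dualTail f N‖) :
    ∃ v : ℓp, ‖v‖ ≤ 1 ∧ (∀ j < N, v j = 0) ∧ r < ‖f v‖ := by
  obtain ⟨x, hx1, hx⟩ := (dualTail f N).exists_lt_apply_of_lt_opNorm hr
  rw [dualTail_apply] at hx
  refine ⟨_, (norm_mono (zero_lt_one.trans_le Fact.out).ne' fun i ↦ ?_).trans hx1.le,
    fun j hj ↦ by rw [sub_sum_range_single_apply, if_pos hj], hx⟩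
  rw [sub_sum_range_single_apply]
  split_ifs <;> simp

theorem exists_block_lt_norm_apply (hp : p ≠ ⊤) {f : ℓp →L[𝕜] 𝕜} {N : ℕ} {r : ℝ}
    (hr : r < ‖dualTail f N‖) : ∃ M, N ≤ M ∧ ∃ u : ℓp, ‖u‖ ≤ 1 ∧ (∀ j < N, u j = 0) ∧
      (∀ j, M ≤ j → u j = 0) ∧ r < ‖f u‖ := by
  obtain ⟨v, hv1, hvN, hv⟩ := exists_tail_lt_norm_apply hr
  have hlim : Tendsto (fun M ↦ ‖f (∑ n ∈ range M, lp.single p n (v n))‖) atTop (𝓝 ‖f v‖) :=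
    ((f.continuous.tendsto v).comp (lp.hasSum_single hp v).tendsto_sum_nat).norm
  obtain ⟨M, hM, hNM⟩ := ((hlim.eventually (eventually_gt_nhds hv)).and
    (eventually_ge_atTop N)).exists
  refine ⟨M, hNM, _, (norm_mono (zero_lt_one.trans_le Fact.out).ne' fun i ↦ ?_).trans hv1,
    fun j hj ↦ ?_, fun j hj ↦ ?_, hM⟩
  · rw [sum_range_single_apply]
    split_ifs <;> simp
  · rw [sum_range_single_apply, hvN j hj, ite_self]
  · rw [sum_range_single_apply, if_neg (not_lt.2 hj)]

theorem two_mul_le_rpow_mul_norm_dualTail (hp : p ≠ ⊤) {f : ℓp →L[𝕜] 𝕜} {r : ℝ}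
    (hr : ∀ M, r < ‖dualTail f M‖) (N : ℕ) : 2 * r ≤ 2 ^ p.toReal⁻¹ * ‖dualTail f N‖ := by
  obtain ⟨M, hNM, u, hu1, huN, huM, hu⟩ := exists_block_lt_norm_apply hp (hr N)
  obtain ⟨v, hv1, hvM, hv⟩ := exists_tail_lt_norm_apply (hr M)
  have hvN : ∀ j < N, v j = 0 := fun j hj ↦ hvM j (hj.trans_le hNM)
  have huv : ∀ i, u i = 0 ∨ v i = 0 := fun i ↦
    (lt_or_ge i M).elim (fun h ↦ .inr (hvM i h)) fun h ↦ .inl (huM i h)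
  have := norm_apply_add_norm_apply_le hp (dualTail f N) hu1 hv1 huv
  rw [dualTail_apply_of_forall_lt_eq_zero f huN, dualTail_apply_of_forall_lt_eq_zero f hvN]
    at this
  linarith

theorem exists_norm_dualTail_lt (hp : 1 < p) (hp' : p ≠ ⊤) (f : ℓp →L[𝕜] 𝕜) {ε : ℝ}
    (hε : 0 < ε) : ∃ N, ‖dualTail f N‖ < ε := by
  have hbdd : BddBelow (Set.range fun N ↦ ‖dualTail f N‖) :=
    ⟨0, by rintro _ ⟨N, rfl⟩; exact norm_nonneg _⟩
  set L := ⨅ N, ‖dualTail f N‖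
  have hL0 : 0 ≤ L := le_ciInf fun N ↦ norm_nonneg _
  have hc : (2 : ℝ) ^ p.toReal⁻¹ < 2 := by
    have hp1 : 1 < p.toReal := by
      simpa using (ENNReal.toReal_lt_toReal ENNReal.one_ne_top hp').2 hp
    simpa using Real.rpow_lt_rpow_of_exponent_lt one_lt_two (inv_lt_one_of_one_lt₀ hp1)
  have hL : L ≤ 2 ^ p.toReal⁻¹ * L / 2 := by
    refine le_of_forall_lt_imp_le_of_dense fun r hr ↦ ?_
    have hr' : ∀ M, r < ‖dualTail f M‖ := fun M ↦ hr.trans_le (ciInf_le hbdd M)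
    rw [Real.mul_iInf_of_nonneg (by positivity), le_div_iff₀' two_pos]
    exact le_ciInf fun N ↦ two_mul_le_rpow_mul_norm_dualTail hp' hr' N
  have hL' : L = 0 := by nlinarith
  exact exists_lt_of_ciInf_lt (hL'.trans_lt hε)

theorem dense_span_range_evalCLM (hp : 1 < p) (hp' : p ≠ ⊤) :
    Dense (Submodule.span 𝕜 (Set.range (evalCLM 𝕜 (fun _ : ℕ ↦ 𝕜) p)) : Set (ℓp →L[𝕜] 𝕜)) := by
  refine Metric.dense_iff.2 fun f ε hε ↦ ?_
  obtain ⟨N, hN⟩ := exists_norm_dualTail_lt hp hp' f hε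
  refine ⟨f - dualTail f N, by rwa [Metric.mem_ball, dist_comm, dist_eq_norm, sub_sub_cancel],
    ?_⟩
  rw [dualTail, sub_sub_cancel]
  exact Submodule.sum_mem _ fun n _ ↦ Submodule.smul_mem _ _ (Submodule.subset_span ⟨n, rfl⟩)

theorem separableSpace_dual (hp : 1 < p) (hp' : p ≠ ⊤) :
    TopologicalSpace.SeparableSpace (ℓp →L[𝕜] 𝕜) := by
  rw [← TopologicalSpace.isSeparable_univ_iff, ← (dense_span_range_evalCLM hp hp').closure_eq]
  exact (Set.countable_range _).isSeparable.span.closure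

theorem evalCLM_comp_eq_sum (hp : p ≠ ⊤) {T : ℓp →L[𝕜] ℓp}
    (hT : ∀ n m, m ≤ n → T (lp.single p n 1) m = 0) (j : ℕ) :
    (evalCLM 𝕜 (fun _ ↦ 𝕜) p j).comp T =
      ∑ m ∈ range j, T (lp.single p m 1) j • evalCLM 𝕜 (fun _ ↦ 𝕜) p m := by
  refine continuousLinearMap_ext_single hp fun k ↦ ?_
  simpa [evalCLM, lp.single_apply, Pi.single_apply] using hT k j

end lp

theorem ContinuousLinearMap.precomp_pow_apply {𝕜 E F : Type*} [NontriviallyNormedField 𝕜]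
    [NormedAddCommGroup E] [NormedSpace 𝕜 E] [NormedAddCommGroup F] [NormedSpace 𝕜 F]
    (T : E →L[𝕜] E) (n : ℕ) (φ : E →L[𝕜] F) : (precomp F T ^ n) φ = φ.comp (T ^ n) := by
  induction n generalizing φ with
  | zero => rfl
  | succ n ih => rw [pow_succ, pow_succ']; exact ih (φ.comp T)

set_option synthInstance.maxHeartbeats 100000 in
theorem adjoint_forward_shift_supercyclic_general (p : ℝ≥0∞) [Fact (1 ≤ p)]
    (hp : 1 < p) (hp' : p ≠ ⊤)
    (a b w : ℕ → ℂ) (ha : ∀ n, a n ≠ 0) (hw : ∀ n, w n ≠ 0)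
    (T : lp (fun _ : ℕ => ℂ) p →L[ℂ] lp (fun _ : ℕ => ℂ) p)
    (hT : RepresentsFw p a b w T) :
    ∃ φ : lp (fun _ : ℕ => ℂ) p →L[ℂ] ℂ,
      Dense (Set.range fun cn : ℂ × ℕ => cn.1 • φ.comp (T ^ cn.2)) := by
  obtain ⟨hsubdiag, -, hlower⟩ := hT
  have := lp.separableSpace_dual (𝕜 := ℂ) hp hp'
  set A : (lp (fun _ : ℕ ↦ ℂ) p →L[ℂ] ℂ) →L[ℂ] lp (fun _ : ℕ ↦ ℂ) p →L[ℂ] ℂ :=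
    ContinuousLinearMap.precomp ℂ T
  have hA := lp.evalCLM_comp_eq_sum hp' hlower
  have ht : ∀ j, T (lp.single p j 1) (j + 1) ≠ 0 := fun j ↦ by
    rw [hsubdiag]
    exact div_ne_zero (mul_ne_zero (hw j) (ha j)) (ha (j + 1))
  obtain ⟨φ, hφ⟩ := exists_dense_range_smul_pow_apply A (lp.dense_span_range_evalCLM hp hp')
    (fun x hx ↦ by simpa [← ContinuousLinearMap.toLinearMap_pow] using
      exists_pow_apply_eq_zero_of_mem_span (A := A.toLinearMap) hA hx)
    fun n y hy ↦ by
      obtain ⟨u, -, hu⟩ := span_range_le_map_pow (A := A.toLinearMap) hA ht n hy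
      exact ⟨u, by simpa [← ContinuousLinearMap.toLinearMap_pow] using hu⟩
  exact ⟨φ, by simpa only [A, ContinuousLinearMap.precomp_pow_apply] using hφ⟩

/-- **Supercyclicity of `F_w^*`.**  The adjoint `T* : φ ↦ φ ∘ T` of a bounded weighted
forward shift on `ℓ^p(ℕ)` is always supercyclic: some `φ` in the dual has projective orbit
`{c·(T*)^n φ : c ∈ ℂ, n ∈ ℕ}` that is norm-dense in the dual. -/
theorem adjoint_forward_shift_supercyclic (p : ℝ≥0∞) [Fact (1 ≤ p)]
    (hp : 1 < p) (hp' : p ≠ ⊤)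
    (a b w : ℕ → ℂ) (ha : ∀ n, a n ≠ 0) (hb : ∀ n, b n ≠ 0) (hw : ∀ n, w n ≠ 0)
    (T : lp (fun _ : ℕ => ℂ) p →L[ℂ] lp (fun _ : ℕ => ℂ) p)
    (hT : RepresentsFw p a b w T) :
    ∃ φ : lp (fun _ : ℕ => ℂ) p →L[ℂ] ℂ,
      Dense (Set.range fun cn : ℂ × ℕ => cn.1 • φ.comp (T ^ cn.2)) :=
  adjoint_forward_shift_supercyclic_general p hp hp' a b w ha hw T hT
end
end

section
/- Let E be a complex Banach space of analytic functions on the open unit disc B(0,1) (via an injective linear map J with continuous point evaluations), whose dual E* is norm-separable, and such that the Taylor-coefficient functionals {k_n : n ≥ 0} are linearly independent and their linear span is norm-dense in E*. Let w : ℕ → ℂ with w_n ≠ 0 for all n, and let T : E → E be a continuous linear operator which is the weighted forward shift with weights w (the 0-th Taylor coefficient of J(Tf) is 0 and the n-th coefficient of J(Tf) is w_{n−1} times the (n−1)-th coefficient of Jf, for all f and n ≥ 1). Then: (i) if inf_{n ≥ 0} ( ‖k_n‖ / ∏_{k=0}^{n−1}|w_k| ) = 0, the adjoint T* is hypercyclic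 on E*; (ii) if lim_{n→∞} ( ‖k_n‖ / ∏_{k=0}^{n−1}|w_k| ) = 0, the adjoint T* is topologically mixing on E*. -/
/-!
The adjoint `A = T*` acts on the Taylor functionals as a weighted backward shift:
`A k₀ = 0` and `A k_{n+1} = w_n k_n`. Hence every `A ^ n` kills each element of the dense span of
the `k_m` once `n` is large, while `k_m` has the explicit preimage
`(w_m ⋯ w_{m+n-1})⁻¹ k_{m+n}` under `A ^ n`, of norm
`|w₀ ⋯ w_{m-1}| · ‖k_{m+n}‖ / |w₀ ⋯ w_{m+n-1}|`.
Along any filter on which these ratios tend to zero, a small perturbation of a vector of `U`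
is therefore sent into `V` by `A ^ n`. When the ratios tend to zero this gives mixing directly.
When only their infimum vanishes, the estimate `‖k_n‖ ≤ ‖A‖ |w_n|⁻¹ ‖k_{n+1}‖` lets one pass from
small values at `j` to small values at all of `j - i, …, j`, which yields a suitable subsequence;
topological transitivity then gives a dense orbit by Birkhoff's Baire-category argument.
-/

open Filter Finset Topology

theorem eventually_residual_dense_range_of_exists_inter_preimage_nonempty {ι X : Type*}
    [TopologicalSpace X] [SecondCountableTopology X] {f : ι → X → X}
    (hf : ∀ i, Continuous (f i))
    (htrans : ∀ U V : Set X, IsOpen U → IsOpen V → U.Nonempty → V.Nonempty →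
      ∃ i, (U ∩ f i ⁻¹' V).Nonempty) :
    ∀ᶠ x in residual X, Dense (Set.range fun i => f i x) := by
  have hB := TopologicalSpace.isBasis_countableBasis X
  have hvisit : ∀ V ∈ TopologicalSpace.countableBasis X, (⋃ i, f i ⁻¹' V) ∈ residual X := by
    intro V hV
    refine residual_of_dense_open (isOpen_iUnion fun i => (hB.isOpen hV).preimage (hf i)) ?_
    refine dense_iff_inter_open.2 fun U hU hUne => ?_
    obtain ⟨i, x, hxU, hxV⟩ := htrans U V hU (hB.isOpen hV) hUne
      (TopologicalSpace.nonempty_of_mem_countableBasis hV)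
    exact ⟨x, hxU, Set.mem_iUnion.2 ⟨i, hxV⟩⟩
  filter_upwards [(countable_bInter_mem (TopologicalSpace.countable_countableBasis X)).2 hvisit]
    with x hx
  refine hB.dense_iff.2 fun V hV _ => ?_
  obtain ⟨i, hi⟩ := Set.mem_iUnion.1 (Set.mem_iInter₂.1 hx V hV)
  exact ⟨f i x, hi, i, rfl⟩

theorem ContinuousLinearMap.eventually_inter_preimage_pow_nonempty {R X : Type*} [Semiring R]
    [TopologicalSpace X] [AddCommMonoid X] [Module R X] [ContinuousAdd X] (A : X →L[R] X)
    {D : Set X} (hD : Dense D) {l : Filter ℕ} (hl : l ≤ atTop)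
    (hnil : ∀ x ∈ D, ∀ᶠ n in atTop, (A ^ n) x = 0)
    (hinv : ∀ y ∈ D, ∃ u : ℕ → X, (∀ᶠ n in l, (A ^ n) (u n) = y) ∧ Tendsto u l (𝓝 0))
    {U V : Set X} (hU : IsOpen U) (hV : IsOpen V) (hUne : U.Nonempty) (hVne : V.Nonempty) :
    ∀ᶠ n in l, (U ∩ ⇑(A ^ n) ⁻¹' V).Nonempty := by
  obtain ⟨x, hxU, hxD⟩ := hD.inter_open_nonempty U hU hUne
  obtain ⟨y, hyV, hyD⟩ := hD.inter_open_nonempty V hV hVne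
  obtain ⟨u, hAu, hu⟩ := hinv y hyD
  have hxu : Tendsto (fun n => x + u n) l (𝓝 x) := by
    simpa using (tendsto_const_nhds (x := x)).add hu
  filter_upwards [hxu (hU.mem_nhds hxU), hl (hnil x hxD), hAu] with n hn hAx hAun
  exact ⟨x + u n, hn, by rwa [Set.mem_preimage, map_add, hAx, hAun, zero_add]⟩

theorem ContinuousLinearMap.flip_compL_pow_apply {𝕜 E F : Type*} [NontriviallyNormedField 𝕜]
    [SeminormedAddCommGroup E] [NormedSpace 𝕜 E] [SeminormedAddCommGroup F] [NormedSpace 𝕜 F]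
    (T : E →L[𝕜] E) (n : ℕ) (φ : E →L[𝕜] F) :
    (((compL 𝕜 E E F).flip T) ^ n) φ = φ.comp (T ^ n) := by
  induction n with
  | zero => rfl
  | succ n ih => rw [pow_succ', mul_apply_eq_comp, ih, pow_succ]; rfl

theorem frequently_lt_of_iInf_eq_zero {a : ℕ → ℝ} (ha : ∀ n, 0 < a n) (h : ⨅ n, a n = 0)
    {ε : ℝ} (hε : 0 < ε) : ∃ᶠ n in atTop, a n < ε := by
  rw [frequently_atTop]
  intro N
  by_contra! hN
  set δ := min ε ((range (N + 1)).inf' nonempty_range_add_one a)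
  have hδ : 0 < δ := lt_min hε ((lt_inf'_iff _).2 fun n _ => ha n)
  have : δ ≤ ⨅ n, a n := le_ciInf fun n => by
    rcases le_or_gt n N with hn | hn
    · exact (min_le_right _ _).trans (inf'_le _ (mem_range.2 (Nat.lt_succ_of_le hn)))
    · exact (min_le_left _ _).trans (hN n hn.le)
  linarith

theorem exists_filter_le_atTop_forall_tendsto_add {a : ℕ → ℝ} {C : ℝ} (ha : ∀ n, 0 ≤ a n)
    (hC : ∀ n, a n ≤ C * a (n + 1)) (hsmall : ∀ ε > 0, ∃ᶠ n in atTop, a n < ε) :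
    ∃ l : Filter ℕ, l.NeBot ∧ l ≤ atTop ∧ ∀ m, Tendsto (fun n => a (m + n)) l (𝓝 0) := by
  set D := max C 1
  have hD : 1 ≤ D := le_max_right _ _
  have hstep : ∀ n i, a n ≤ D ^ i * a (n + i) := by
    intro n i
    induction i with
    | zero => simp
    | succ i ih =>
      calc a n ≤ D ^ i * a (n + i) := ih
        _ ≤ D ^ i * (D * a (n + i + 1)) := by
          gcongr
          exact (hC _).trans (mul_le_mul_of_nonneg_right (le_max_left _ _) (ha _))
        _ = D ^ (i + 1) * a (n + (i + 1)) := by rw [pow_succ, ← add_assoc]; ring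
  -- `a (j k)` is so small that, by `hstep`, `a` stays below `1 / (k + 1)` on `[j k - k, j k]`
  obtain ⟨j, -, hj⟩ := extraction_forall_of_frequently
    (P := fun k j => 2 * k ≤ j ∧ D ^ k * a j < 1 / (k + 1)) fun k => by
      have hDk : 0 < D ^ k := by positivity
      refine ((eventually_ge_atTop (2 * k)).and_frequently
        (hsmall (1 / (k + 1) / D ^ k) (by positivity))).mono fun n hn => ?_
      exact ⟨hn.1, (lt_div_iff₀' hDk).1 hn.2⟩
  have hjk : ∀ k, k ≤ j k - k := fun k => by have := (hj k).1; omega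
  refine ⟨map (fun k => j k - k) atTop, inferInstance, tendsto_atTop_mono hjk tendsto_id,
    fun m => ?_⟩
  rw [tendsto_map'_iff]
  refine squeeze_zero' (.of_forall fun k => ha _) ?_ tendsto_one_div_add_atTop_nhds_zero_nat
  filter_upwards [eventually_ge_atTop m] with k hk
  have := hjk k
  calc a (m + (j k - k)) ≤ D ^ (k - m) * a (j k) := by
        simpa [show m + (j k - k) + (k - m) = j k by omega] using hstep (m + (j k - k)) (k - m)
    _ ≤ D ^ k * a (j k) :=
        mul_le_mul_of_nonneg_right (pow_le_pow_right₀ hD (Nat.sub_le k m)) (ha _)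
    _ ≤ 1 / (k + 1) := (hj k).2.le

structure IsWeightedBackwardShift {R X : Type*} [Semiring R] [TopologicalSpace X]
    [AddCommMonoid X] [Module R X] (A : X →L[R] X) (e : ℕ → X) (w : ℕ → R) : Prop where
  apply_zero : A (e 0) = 0
  apply_succ : ∀ n, A (e (n + 1)) = w n • e n

namespace IsWeightedBackwardShift

section Algebraic

variable {R X : Type*} [CommSemiring R] [TopologicalSpace X] [AddCommMonoid X] [Module R X]
  {A : X →L[R] X} {e : ℕ → X} {w : ℕ → R}

theorem pow_apply_add (h : IsWeightedBackwardShift A e w) (m n : ℕ) :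
    (A ^ n) (e (m + n)) = (∏ k ∈ Ico m (m + n), w k) • e m := by
  induction n with
  | zero => simp
  | succ n ih =>
    rw [pow_succ, mul_apply_eq_comp, ← add_assoc, h.apply_succ, map_smul, ih,
      smul_smul, prod_Ico_succ_top (Nat.le_add_right m n), mul_comm]

theorem pow_apply_of_lt (h : IsWeightedBackwardShift A e w) {m n : ℕ} (hmn : m < n) :
    (A ^ n) (e m) = 0 := by
  obtain ⟨i, rfl⟩ := Nat.exists_eq_add_of_lt hmn
  have hm : (A ^ m) (e m) = (∏ k ∈ Ico 0 m, w k) • e 0 := by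
    simpa using h.pow_apply_add 0 m
  rw [show m + i + 1 = i + 1 + m by omega, pow_add, pow_succ, mul_apply_eq_comp,
    mul_apply_eq_comp, hm, map_smul, h.apply_zero, smul_zero, map_zero]

theorem eventually_pow_apply_eq_zero (h : IsWeightedBackwardShift A e w) {y : X}
    (hy : y ∈ Submodule.span R (Set.range e)) : ∀ᶠ n in atTop, (A ^ n) y = 0 := by
  induction hy using Submodule.span_induction with
  | mem y hy =>
    obtain ⟨m, rfl⟩ := hy
    exact (eventually_gt_atTop m).mono fun n hn => h.pow_apply_of_lt hn
  | zero => exact .of_forall fun n => map_zero _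
  | add y z _ _ hy hz => filter_upwards [hy, hz] with n hyn hzn; rw [map_add, hyn, hzn, add_zero]
  | smul c y _ hy => filter_upwards [hy] with n hyn; rw [map_smul, hyn, smul_zero]

end Algebraic

section Normed

variable {𝕜 X : Type*} [NontriviallyNormedField 𝕜] [SeminormedAddCommGroup X] [NormedSpace 𝕜 X]
  {A : X →L[𝕜] X} {e : ℕ → X} {w : ℕ → 𝕜}

noncomputable def weightedNorm (e : ℕ → X) (w : ℕ → 𝕜) (n : ℕ) : ℝ :=
  ‖e n‖ / ∏ k ∈ range n, ‖w k‖

theorem weightedNorm_le_opNorm_mul_succ (h : IsWeightedBackwardShift A e w) (hw : ∀ n, w n ≠ 0)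
    (n : ℕ) : weightedNorm e w n ≤ ‖A‖ * weightedNorm e w (n + 1) := by
  have hP : 0 < ∏ k ∈ range n, ‖w k‖ := prod_pos fun k _ => norm_pos_iff.2 (hw k)
  have hwn : 0 < ‖w n‖ := norm_pos_iff.2 (hw n)
  have hnorm : ‖w n‖ * ‖e n‖ ≤ ‖A‖ * ‖e (n + 1)‖ := by
    rw [← norm_smul, ← h.apply_succ]
    exact A.le_opNorm _
  rw [weightedNorm, weightedNorm, prod_range_succ]
  calc ‖e n‖ / ∏ k ∈ range n, ‖w k‖
      = ‖w n‖ * ‖e n‖ / ((∏ k ∈ range n, ‖w k‖) * ‖w n‖) := by field_simp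
    _ ≤ ‖A‖ * ‖e (n + 1)‖ / ((∏ k ∈ range n, ‖w k‖) * ‖w n‖) := by gcongr
    _ = ‖A‖ * (‖e (n + 1)‖ / ((∏ k ∈ range n, ‖w k‖) * ‖w n‖)) := mul_div_assoc _ _ _

theorem pow_apply_inv_prod_smul (h : IsWeightedBackwardShift A e w) (hw : ∀ n, w n ≠ 0)
    (m n : ℕ) : (A ^ n) ((∏ k ∈ Ico m (m + n), w k)⁻¹ • e (m + n)) = e m := by
  rw [map_smul, h.pow_apply_add, smul_smul,
    inv_mul_cancel₀ (prod_ne_zero_iff.2 fun k _ => hw k), one_smul]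

theorem tendsto_inv_prod_smul_zero (hw : ∀ n, w n ≠ 0) {l : Filter ℕ} {m : ℕ}
    (hl : Tendsto (fun n => weightedNorm e w (m + n)) l (𝓝 0)) :
    Tendsto (fun n => (∏ k ∈ Ico m (m + n), w k)⁻¹ • e (m + n)) l (𝓝 0) := by
  have hnorm : ∀ n, ‖(∏ k ∈ Ico m (m + n), w k)⁻¹ • e (m + n)‖ =
      (∏ k ∈ range m, ‖w k‖) * weightedNorm e w (m + n) := by
    intro n
    have hIco : 0 < ∏ k ∈ Ico m (m + n), ‖w k‖ := prod_pos fun k _ => norm_pos_iff.2 (hw k)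
    have hrange : 0 < ∏ k ∈ range m, ‖w k‖ := prod_pos fun k _ => norm_pos_iff.2 (hw k)
    rw [norm_smul, norm_inv, norm_prod, weightedNorm,
      ← prod_range_mul_prod_Ico _ (Nat.le_add_right m n)]
    field_simp
  rw [tendsto_zero_iff_norm_tendsto_zero]
  simpa [hnorm] using hl.const_mul (∏ k ∈ range m, ‖w k‖)

theorem exists_tendsto_zero_pow_apply_eq (h : IsWeightedBackwardShift A e w)
    (hw : ∀ n, w n ≠ 0) {l : Filter ℕ}
    (hl : ∀ m, Tendsto (fun n => weightedNorm e w (m + n)) l (𝓝 0)) {y : X}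
    (hy : y ∈ Submodule.span 𝕜 (Set.range e)) :
    ∃ u : ℕ → X, (∀ n, (A ^ n) (u n) = y) ∧ Tendsto u l (𝓝 0) := by
  induction hy using Submodule.span_induction with
  | mem y hy =>
    obtain ⟨m, rfl⟩ := hy
    exact ⟨_, h.pow_apply_inv_prod_smul hw m, tendsto_inv_prod_smul_zero hw (hl m)⟩
  | zero => exact ⟨0, fun n => map_zero _, tendsto_const_nhds⟩
  | add y z _ _ hy hz =>
    obtain ⟨u, hu, hu0⟩ := hy
    obtain ⟨v, hv, hv0⟩ := hz
    exact ⟨fun n => u n + v n, fun n => by rw [map_add, hu, hv], by simpa using hu0.add hv0⟩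
  | smul c y _ hy =>
    obtain ⟨u, hu, hu0⟩ := hy
    exact ⟨fun n => c • u n, fun n => by rw [map_smul, hu], by simpa using hu0.const_smul c⟩

theorem eventually_inter_preimage_pow_nonempty (h : IsWeightedBackwardShift A e w)
    (hw : ∀ n, w n ≠ 0) (hdense : Dense (Submodule.span 𝕜 (Set.range e) : Set X))
    {l : Filter ℕ} (hlat : l ≤ atTop)
    (hl : ∀ m, Tendsto (fun n => weightedNorm e w (m + n)) l (𝓝 0))
    {U V : Set X} (hU : IsOpen U) (hV : IsOpen V) (hUne : U.Nonempty) (hVne : V.Nonempty) :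
    ∀ᶠ n in l, (U ∩ ⇑(A ^ n) ⁻¹' V).Nonempty :=
  A.eventually_inter_preimage_pow_nonempty hdense hlat
    (fun _ hy => h.eventually_pow_apply_eq_zero hy)
    (fun _ hy => (h.exists_tendsto_zero_pow_apply_eq hw hl hy).imp fun _ hu =>
      ⟨.of_forall hu.1, hu.2⟩)
    hU hV hUne hVne

end Normed

end IsWeightedBackwardShift

theorem adjoint_shift_hypercyclic_mixing_general_general
    {E : Type*} [NormedAddCommGroup E] [NormedSpace ℂ E]
    [TopologicalSpace.SeparableSpace (StrongDual ℂ E)]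
    (J : E →ₗ[ℂ] (ℂ → ℂ))
    (K : ℕ → StrongDual ℂ E)
    (hK : ∀ (n : ℕ) (f : E), K n f = iteratedDeriv n (J f) 0 / (n.factorial : ℂ))
    (hKli : LinearIndependent ℂ K)
    (hKdense : Dense ((Submodule.span ℂ (Set.range K) :
      Submodule ℂ (StrongDual ℂ E)) : Set (StrongDual ℂ E)))
    (w : ℕ → ℂ) (hw : ∀ n, w n ≠ 0) (T : E →L[ℂ] E)
    (hT0 : ∀ f : E, iteratedDeriv 0 (J (T f)) 0 / ((0 : ℕ).factorial : ℂ) = 0)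
    (hTshift : ∀ (f : E) (n : ℕ),
      iteratedDeriv (n + 1) (J (T f)) 0 / ((n + 1).factorial : ℂ) =
        w n * (iteratedDeriv n (J f) 0 / (n.factorial : ℂ))) :
    ((⨅ n : ℕ, ‖K n‖ / ∏ k ∈ Finset.range n, ‖w k‖) = 0 →
      ∃ φ : StrongDual ℂ E, Dense (Set.range fun n : ℕ => φ.comp (T ^ n))) ∧
    (Tendsto (fun n : ℕ => ‖K n‖ / ∏ k ∈ Finset.range n, ‖w k‖) atTop (𝓝 0) →
      ∀ U V : Set (StrongDual ℂ E),
        IsOpen U → IsOpen V → U.Nonempty → V.Nonempty →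
        ∃ N : ℕ, ∀ n ≥ N,
          ((fun φ : StrongDual ℂ E => φ.comp (T ^ n)) '' U ∩ V).Nonempty) := by
  set A := (ContinuousLinearMap.compL ℂ E E ℂ).flip T
  have hA : IsWeightedBackwardShift A K w := by
    constructor
    · ext f
      exact (hK 0 (T f)).trans (hT0 f)
    · intro n
      ext f
      show K (n + 1) (T f) = w n * K n f
      rw [hK, hK, hTshift]
  have hpow : ∀ n (φ : StrongDual ℂ E), φ.comp (T ^ n) = (A ^ n) φ :=
    fun n φ => (ContinuousLinearMap.flip_compL_pow_apply T n φ).symm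
  refine ⟨fun hinf => ?_, fun hlim U V hU hV hUne hVne => ?_⟩
  · have hpos : ∀ n, 0 < IsWeightedBackwardShift.weightedNorm K w n := fun n =>
      div_pos (norm_pos_iff.2 (hKli.ne_zero n)) (prod_pos fun k _ => norm_pos_iff.2 (hw k))
    obtain ⟨l, hl, hlat, hla⟩ := exists_filter_le_atTop_forall_tendsto_add (fun n => (hpos n).le)
      (hA.weightedNorm_le_opNorm_mul_succ hw) fun _ => frequently_lt_of_iInf_eq_zero hpos hinf
    have horbits := eventually_residual_dense_range_of_exists_inter_preimage_nonempty
      (fun n => (A ^ n).continuous) fun U V hU hV hUne hVne =>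
        (hA.eventually_inter_preimage_pow_nonempty hw hKdense hlat hla hU hV hUne hVne).exists
    obtain ⟨φ, hφ⟩ := (dense_of_mem_residual horbits).nonempty
    refine ⟨φ, ?_⟩
    simp only [hpow]
    exact hφ
  · obtain ⟨N, hN⟩ := (hA.eventually_inter_preimage_pow_nonempty hw hKdense le_rfl
      (fun m => hlim.comp (tendsto_atTop_mono (Nat.le_add_left · m) tendsto_id)) hU hV hUne
      hVne).exists_forall_of_atTop
    exact ⟨N, fun n hn => by simpa only [hpow, Set.image_inter_nonempty_iff] using hN n hn⟩

/-- **Hypercyclicity and mixing of `F_w^*` on a general space of analytic functions.**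
Let `E` be a complex Banach space of analytic functions on the unit disc (via an injective
linear map `J` with continuous point evaluations), with norm-separable dual, linearly
independent Taylor-coefficient functionals `k_n` whose span is norm-dense in `E*`, and let
`T` be a bounded weighted forward shift with nonzero weights `w`.  Then:
(i) if `inf_n ‖k_n‖/∏_{k<n}|w_k| = 0`, the adjoint `T*` is hypercyclic;
(ii) if `‖k_n‖/∏_{k<n}|w_k| → 0`, the adjoint `T*` is topologically mixing. -/
theorem adjoint_shift_hypercyclic_mixing_general
    {E : Type*} [NormedAddCommGroup E] [NormedSpace ℂ E] [CompleteSpace E]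
    [TopologicalSpace.SeparableSpace (StrongDual ℂ E)]
    (J : E →ₗ[ℂ] (ℂ → ℂ))
    (hJa : ∀ f : E, ∀ z ∈ Metric.ball (0 : ℂ) 1, AnalyticAt ℂ (J f) z)
    (hJc : ∀ z ∈ Metric.ball (0 : ℂ) 1, Continuous fun f : E => J f z)
    (hJinj : Function.Injective J)
    (K : ℕ → StrongDual ℂ E)
    (hK : ∀ (n : ℕ) (f : E), K n f = iteratedDeriv n (J f) 0 / (n.factorial : ℂ))
    (hKli : LinearIndependent ℂ K)
    (hKdense : Dense ((Submodule.span ℂ (Set.range K) :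
      Submodule ℂ (StrongDual ℂ E)) : Set (StrongDual ℂ E)))
    (w : ℕ → ℂ) (hw : ∀ n, w n ≠ 0) (T : E →L[ℂ] E)
    (hT0 : ∀ f : E, iteratedDeriv 0 (J (T f)) 0 / ((0 : ℕ).factorial : ℂ) = 0)
    (hTshift : ∀ (f : E) (n : ℕ),
      iteratedDeriv (n + 1) (J (T f)) 0 / ((n + 1).factorial : ℂ) =
        w n * (iteratedDeriv n (J f) 0 / (n.factorial : ℂ))) :
    ((⨅ n : ℕ, ‖K n‖ / ∏ k ∈ Finset.range n, ‖w k‖) = 0 →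
      ∃ φ : StrongDual ℂ E, Dense (Set.range fun n : ℕ => φ.comp (T ^ n))) ∧
    (Tendsto (fun n : ℕ => ‖K n‖ / ∏ k ∈ Finset.range n, ‖w k‖) atTop (𝓝 0) →
      ∀ U V : Set (StrongDual ℂ E),
        IsOpen U → IsOpen V → U.Nonempty → V.Nonempty →
        ∃ N : ℕ, ∀ n ≥ N,
          ((fun φ : StrongDual ℂ E => φ.comp (T ^ n)) '' U ∩ V).Nonempty) :=
  adjoint_shift_hypercyclic_mixing_general_general J K hK hKli hKdense w hw T hT0 hTshift
end

section
/- Fix 1 ≤ p < ∞ and let B : ℓ^p(ℕ) → ℓ^p(ℕ) be the backward shift, the continuous linear operator with (Bx)_n = x_{n+1} for all x and n. Let λ ∈ ℂ with |λ| = 1 and let K_λ : ℓ^p(ℕ) → ℓ^p(ℕ) be the rank-one operator K_λ(x) = (λ x_0) e_0. Then: (a) (B + K_λ) e_0 = λ e_0, so e_0 is an eigenvector of B + K_λ with unimodular eigenvalue λ; in particular, if λ^m = 1 for some m ≥ 1 then (B + K_λ)^m e_0 = e_0, i.e. e_0 is a non-trivial periodic vector of B + K_λ; and (b) B + K_λ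 is not hypercyclic: there is no x ∈ ℓ^p(ℕ) whose orbit {(B + K_λ)^n x : n ∈ ℕ} is dense in ℓ^p(ℕ). -/
open scoped ENNReal

/-!
`B` kills `e₀` and `K_λ` sends it to `λ e₀`, so `e₀` is an eigenvector of `B + K_λ`.
Since `K_λ` only changes the coordinate `0`, `B + K_λ` acts as the backward shift on the
coordinates `k ≥ 1`, so the coordinate `1` of the `n`-th iterate of `x` is `x_{n+1}`, which is
bounded by `‖x‖`. A dense orbit would project onto a dense, hence unbounded, subset of `ℂ`.
-/

theorem not_dense_of_isBounded_image {X Y : Type*} [TopologicalSpace X]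
    [NormedAddCommGroup Y] [NormedSpace ℝ Y] [Nontrivial Y] {f : X → Y}
    (hf : Continuous f) (hf_dense : DenseRange f) {s : Set X}
    (hs : Bornology.IsBounded (f '' s)) : ¬ Dense s := fun hs_dense => by
  have huniv : closure (f '' s) = Set.univ := (hf_dense.dense_image hf hs_dense).closure_eq
  exact NormedSpace.unbounded_univ ℝ Y (huniv ▸ hs.closure)

namespace lp

variable {E : Type*} [NormedAddCommGroup E] {p : ℝ≥0∞}

theorem iterate_apply_of_apply_eq_succ {T : lp (fun _ : ℕ => E) p → lp (fun _ : ℕ => E) p}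
    {j : ℕ} (hT : ∀ y k, j ≤ k → T y k = y (k + 1)) (x : lp (fun _ : ℕ => E) p) (n : ℕ)
    {k : ℕ} (hk : j ≤ k) : (T^[n] x) k = x (k + n) := by
  induction n generalizing k with
  | zero => rfl
  | succ n ih =>
    rw [Function.iterate_succ_apply', hT _ k hk, ih (by omega : j ≤ k + 1), add_right_comm,
      add_assoc]

variable [Fact (1 ≤ p)] [NormedSpace ℝ E] [Nontrivial E]

theorem not_denseRange_iterate_of_apply_eq_succ
    {T : lp (fun _ : ℕ => E) p → lp (fun _ : ℕ => E) p}
    {j : ℕ} (hT : ∀ y k, j ≤ k → T y k = y (k + 1)) (x : lp (fun _ : ℕ => E) p) :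
    ¬ DenseRange fun n => T^[n] x := by
  have hp : p ≠ 0 := (zero_lt_one.trans_le Fact.out).ne'
  refine not_dense_of_isBounded_image (f := fun y : lp (fun _ : ℕ => E) p => y j)
    (lipschitzWith_one_eval p j).continuous
    (Function.Surjective.denseRange fun c =>
      ⟨lp.single p j c, lp.single_apply_self (E := fun _ : ℕ => E) p j c⟩) ?_
  refine (Metric.isBounded_closedBall (x := (0 : E)) (r := ‖x‖)).subset ?_
  rintro _ ⟨_, ⟨n, rfl⟩, rfl⟩
  dsimp only
  rw [mem_closedBall_zero_iff, iterate_apply_of_apply_eq_succ hT x n le_rfl]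
  exact norm_apply_le_norm hp x (j + n)

end lp

theorem backward_shift_rank_one_perturbation_general (p : ℝ≥0∞) [Fact (1 ≤ p)]
    (B : lp (fun _ : ℕ => ℂ) p →L[ℂ] lp (fun _ : ℕ => ℂ) p)
    (hB : ∀ (x : lp (fun _ : ℕ => ℂ) p) (n : ℕ),
      (B x : ∀ _ : ℕ, ℂ) n = (x : ∀ _ : ℕ, ℂ) (n + 1))
    (lam : ℂ)
    (K : lp (fun _ : ℕ => ℂ) p →L[ℂ] lp (fun _ : ℕ => ℂ) p)
    (hK : ∀ x : lp (fun _ : ℕ => ℂ) p,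
      K x = (lam * (x : ∀ _ : ℕ, ℂ) 0) • lp.single p 0 (1 : ℂ)) :
    (B + K) (lp.single p 0 (1 : ℂ)) = lam • lp.single p 0 (1 : ℂ) ∧
    (∀ m : ℕ, 1 ≤ m → lam ^ m = 1 →
      ((B + K) ^ m) (lp.single p 0 (1 : ℂ)) = lp.single p 0 (1 : ℂ)) ∧
    ¬ ∃ x : lp (fun _ : ℕ => ℂ) p,
        Dense (Set.range fun n : ℕ => ((B + K) ^ n) x) := by
  set e₀ := lp.single (E := fun _ : ℕ => ℂ) p 0 1
  have hBe₀ : B e₀ = 0 := lp.ext <| funext fun n => by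
    rw [hB, lp.single_apply_ne p 0 _ n.succ_ne_zero]; rfl
  have he₀ : (B + K) e₀ = lam • e₀ := by
    rw [add_apply, hBe₀, hK, lp.single_apply_self, mul_one, zero_add]
  have heig : Module.End.HasEigenvector (B + K : Module.End ℂ _) lam e₀ :=
    ⟨Module.End.mem_genEigenspace_one.mpr he₀,
      ne_of_apply_ne (fun y : lp (fun _ : ℕ => ℂ) p => y 0) (by simp [e₀])⟩
  refine ⟨he₀, fun m _ hm => ?_, ?_⟩
  · simpa only [← ContinuousLinearMap.toLinearMap_pow, ContinuousLinearMap.coe_coe, hm,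
      one_smul] using heig.pow_apply m
  · have hshift : ∀ y k, 1 ≤ k → (B + K) y k = y (k + 1) := fun y k hk => by
      rw [add_apply, lp.coeFn_add, Pi.add_apply, hB, hK, lp.coeFn_smul,
        Pi.smul_apply, lp.single_apply_ne p 0 _ (by omega), smul_zero, add_zero]
    rintro ⟨x, hx⟩
    exact lp.not_denseRange_iterate_of_apply_eq_succ hshift x
      (by simpa only [DenseRange, FunLike.coe_pow_eq_iterate] using hx)

/-- **A rank-one perturbation of the backward shift with periodic vectors but no
hypercyclic vectors.**  Let `B` be the backward shift on `ℓ^p(ℕ)` and, for `|λ| = 1`, let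
`K_λ(x) = (λ x_0)·e_0`.  Then `(B + K_λ) e_0 = λ e_0`; if `λ^m = 1` with `m ≥ 1` then
`e_0` is a non-trivial periodic vector of `B + K_λ`; and `B + K_λ` is not hypercyclic. -/
theorem backward_shift_rank_one_perturbation (p : ℝ≥0∞) [Fact (1 ≤ p)] (hp' : p ≠ ⊤)
    (B : lp (fun _ : ℕ => ℂ) p →L[ℂ] lp (fun _ : ℕ => ℂ) p)
    (hB : ∀ (x : lp (fun _ : ℕ => ℂ) p) (n : ℕ),
      (B x : ∀ _ : ℕ, ℂ) n = (x : ∀ _ : ℕ, ℂ) (n + 1))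
    (lam : ℂ) (hlam : ‖lam‖ = 1)
    (K : lp (fun _ : ℕ => ℂ) p →L[ℂ] lp (fun _ : ℕ => ℂ) p)
    (hK : ∀ x : lp (fun _ : ℕ => ℂ) p,
      K x = (lam * (x : ∀ _ : ℕ, ℂ) 0) • lp.single p 0 (1 : ℂ)) :
    (B + K) (lp.single p 0 (1 : ℂ)) = lam • lp.single p 0 (1 : ℂ) ∧
    (∀ m : ℕ, 1 ≤ m → lam ^ m = 1 →
      ((B + K) ^ m) (lp.single p 0 (1 : ℂ)) = lp.single p 0 (1 : ℂ)) ∧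
    ¬ ∃ x : lp (fun _ : ℕ => ℂ) p,
        Dense (Set.range fun n : ℕ => ((B + K) ^ n) x) :=
  backward_shift_rank_one_perturbation_general p B hB lam K hK
end
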